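/- arXiv:2304.10184 — 7 statements merged into one kernel-verified Lean document; each statement's English description precedes it below -/
import Mathlib

section
/- Let $\ell \ge 2$ and $k \in \{0,\dots,\ell\}$. The set $\{\xi_k^{(\pm i)} \mid i \ne 0, \ k \pm i \in \{0,\dots,\ell\}\}$ (with signs chosen so that the index stays in range; there are exactly $\ell$ such elements) is a basis of the $\mathbb{Q}$-vector space $\sum_{j \in \{0,\dots,\ell\}\setminus\{k\}} \mathbb{Q}\,\alpha_j$. -/
open scoped BigOperators

/-- Cartan matrix of affine type C⁽¹⁾_ℓ (indices in {0,…,ℓ}). -/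
def cartanC (ℓ i j : ℕ) : ℚ :=
  if i = j then 2
  else if i = 0 ∧ j = 1 then -1
  else if i = 1 ∧ j = 0 then -2
  else if i = ℓ ∧ j = ℓ - 1 then -1
  else if i = ℓ - 1 ∧ j = ℓ then -2
  else if 1 ≤ i ∧ i ≤ ℓ - 1 ∧ (j = i + 1 ∨ j + 1 = i) then -1
  else 0

/-- d = (2,1,…,1,2). -/
def dC (ℓ i : ℕ) : ℚ := if i = 0 ∨ i = ℓ then 2 else 1

/-- Weight space: first component = coefficients of fundamental weights Λ_i,
second component = coefficients of simple roots α_i. -/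
abbrev Wt : Type := (ℕ → ℚ) × (ℕ → ℚ)

/-- The fundamental weight Λ_k. -/
def Lam (k : ℕ) : Wt := (fun i => if i = k then 1 else 0, 0)

/-- The simple root α_i. -/
def al (i : ℕ) : Wt := (0, fun j => if j = i then 1 else 0)

/-- The pairing ⟨α_j^∨, v⟩, extended linearly from ⟨α_j^∨,Λ_i⟩ = δ_{ij},
⟨α_j^∨,α_i⟩ = a_{ji}. -/
def pairC (ℓ j : ℕ) (v : Wt) : ℚ :=
  v.1 j + ∑ i ∈ Finset.range (ℓ + 1), v.2 i * cartanC ℓ j i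

/-- The symmetric bilinear form, with (Λ_i,α_j) = d_j δ_{ij} and (α_i,α_j) = d_i a_{ij}. -/
def formC (ℓ : ℕ) (v w : Wt) : ℚ :=
  (∑ j ∈ Finset.range (ℓ + 1), v.1 j * dC ℓ j * w.2 j)
  + (∑ j ∈ Finset.range (ℓ + 1), w.1 j * dC ℓ j * v.2 j)
  + ∑ i ∈ Finset.range (ℓ + 1), ∑ j ∈ Finset.range (ℓ + 1),
      v.2 i * dC ℓ i * cartanC ℓ i j * w.2 j

/-- The defect of β relative to Λ_k. -/
def defC (ℓ k : ℕ) (β : Wt) : ℚ := formC ℓ (Lam k) β - formC ℓ β β / 2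

/-- The null root δ = α_0 + 2α_1 + ⋯ + 2α_{ℓ-1} + α_ℓ. -/
def deltaC (ℓ : ℕ) : Wt :=
  (0, fun j => if j = 0 ∨ j = ℓ then 1 else if j < ℓ then 2 else 0)

/-- ξ_k^{(i)} = α_{k+1} + 2α_{k+2} + ⋯ + (i-1)α_{k+i-1} + i(α_{k+i}+⋯+α_{ℓ-1}) + (i/2)α_ℓ
(equal to 0 when i = 0). -/
def xiP (ℓ k i : ℕ) : Wt :=
  (0, fun j => if j ≤ k ∨ ℓ < j then 0
      else if j = ℓ then (i : ℚ) / 2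
      else min ((j : ℚ) - k) i)

/-- ξ_k^{(-i)} = α_{k-1} + 2α_{k-2} + ⋯ + (i-1)α_{k-i+1} + i(α_{k-i}+⋯+α_1) + (i/2)α_0
(equal to 0 when i = 0). -/
def xiM (ℓ k i : ℕ) : Wt :=
  (0, fun j => if k ≤ j ∨ ℓ < j then 0
      else if j = 0 then (i : ℚ) / 2
      else min ((k : ℚ) - j) i)

/-- The simple reflection r_j : v ↦ v − ⟨α_j^∨, v⟩α_j. -/
def reflC (ℓ j : ℕ) (v : Wt) : Wt := v - pairC ℓ j v • al j

/-- Action of a word in the simple reflections (leftmost letter applied last,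
so the word reads as the usual composition r_{j₁}r_{j₂}⋯r_{jₙ}). -/
def wordAct (ℓ : ℕ) (w : List ℕ) (v : Wt) : Wt := w.foldr (reflC ℓ) v

/-- The residue map π_ℓ : ℤ → {0,…,ℓ}. -/
def fres (ℓ : ℕ) (m : ℤ) : ℕ :=
  let r := (m % (2 * (ℓ : ℤ))).toNat
  if r ≤ ℓ then r else 2 * ℓ - r

/-- Content of the partition `lam` (rows indexed by `r < N`, all rows `≥ N` empty),
with residues computed at charge k, as an element of the root lattice. -/
def contV (ℓ k N : ℕ) (lam : ℕ → ℕ) : Wt :=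
  ∑ r ∈ Finset.range N, ∑ c ∈ Finset.range (lam r),
    al (fres ℓ ((k : ℤ) + c - r))

namespace Stmt3Aux

/-- coordinate of the ξ-vector attached to endpoint j, at position t -/
def co (ℓ k j t : ℕ) : ℚ :=
  (if j < k then xiM ℓ k (k - j) else xiP ℓ k (j - k)).2 t

lemma co_plus (ℓ k j t : ℕ) (hjk : k ≤ j) (hkt : k < t) (htl : t < ℓ) (hjl : j ≤ ℓ) :
    co ℓ k j t = ((min (t - k) (j - k) : ℕ) : ℚ) := by
  unfold co xiP
  rw [if_neg (by omega)]
  simp only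
  rw [if_neg (by omega), if_neg (by omega)]
  rw [show ((t : ℚ) - k) = ((t - k : ℕ) : ℚ) by
    rw [Nat.cast_sub (by omega)]]
  rw [Nat.cast_min]

lemma co_plus_top (ℓ k j : ℕ) (hjk : k ≤ j) (hkl : k < ℓ) :
    co ℓ k j ℓ = ((j - k : ℕ) : ℚ) / 2 := by
  unfold co xiP
  rw [if_neg (by omega)]
  simp only
  rw [if_neg (by omega)]
  simp

lemma co_zero_right (ℓ k j t : ℕ) (hjk : k ≤ j) (ht : t ≤ k ∨ ℓ < t) :
    co ℓ k j t = 0 := by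
  unfold co xiP
  rw [if_neg (by omega)]
  simp only
  rw [if_pos ht]

lemma co_minus (ℓ k j t : ℕ) (hkl : k ≤ ℓ) (hjk : j < k) (hkt : 0 < t) (htl : t < k) :
    co ℓ k j t = ((min (k - t) (k - j) : ℕ) : ℚ) := by
  unfold co xiM
  rw [if_pos hjk]
  simp only
  rw [if_neg (by omega), if_neg (by omega)]
  rw [show ((k : ℚ) - t) = ((k - t : ℕ) : ℚ) by
    rw [Nat.cast_sub (by omega)]]
  rw [Nat.cast_min]

lemma co_minus_bot (ℓ k j : ℕ) (hjk : j < k) :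
    co ℓ k j 0 = ((k - j : ℕ) : ℚ) / 2 := by
  unfold co xiM
  rw [if_pos hjk]
  simp only
  rw [if_neg (by omega)]
  simp

lemma co_zero_left (ℓ k j t : ℕ) (hjk : j < k) (ht : k ≤ t ∨ ℓ < t) :
    co ℓ k j t = 0 := by
  unfold co xiM
  rw [if_pos hjk]
  simp only
  rw [if_pos ht]

/-- difference of successive coordinates on the plus side -/
lemma L1 (ℓ k t j : ℕ) (hkt : k ≤ t) (htl : t + 2 ≤ ℓ) (hj : j ≤ ℓ) :
    co ℓ k j (t + 1) - co ℓ k j t = if t < j then 1 else 0 := by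
  by_cases hjk : j < k
  · rw [co_zero_left ℓ k j (t+1) hjk (Or.inl (by omega)),
        co_zero_left ℓ k j t hjk (Or.inl (by omega)), if_neg (by omega)]
    ring
  · push_neg at hjk
    rw [co_plus ℓ k j (t+1) hjk (by omega) (by omega) hj]
    have ht' : co ℓ k j t = ((min (t - k) (j - k) : ℕ) : ℚ) := by
      by_cases htk : t = k
      · rw [co_zero_right ℓ k j t hjk (Or.inl (by omega))]
        rw [show min (t - k) (j - k) = 0 by omega]
        simp
      · exact co_plus ℓ k j t hjk (by omega) (by omega) hj
    rw [ht']
    by_cases htj : t < j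
    · rw [if_pos htj, show min (t + 1 - k) (j - k) = min (t - k) (j - k) + 1 by omega]
      push_cast; ring
    · rw [if_neg htj, show min (t + 1 - k) (j - k) = min (t - k) (j - k) by omega]
      ring

/-- the top equation on the plus side -/
lemma L2 (ℓ k t j : ℕ) (hkt : k ≤ t) (htl : t + 1 = ℓ) (hj : j ≤ ℓ) :
    2 * co ℓ k j ℓ - co ℓ k j t = if j = ℓ then 1 else 0 := by
  by_cases hjk : j < k
  · rw [co_zero_left ℓ k j ℓ hjk (Or.inl (by omega)),
        co_zero_left ℓ k j t hjk (Or.inl (by omega)), if_neg (by omega)]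
    ring
  · push_neg at hjk
    rw [co_plus_top ℓ k j hjk (by omega)]
    have ht' : co ℓ k j t = ((min (t - k) (j - k) : ℕ) : ℚ) := by
      by_cases htk : t = k
      · rw [co_zero_right ℓ k j t hjk (Or.inl (by omega))]
        rw [show min (t - k) (j - k) = 0 by omega]
        simp
      · exact co_plus ℓ k j t hjk (by omega) (by omega) hj
    rw [ht']
    by_cases hjl : j = ℓ
    · subst hjl
      rw [if_pos rfl, show min (t - k) (j - k) = j - k - 1 by omega]
      rw [show ((j - k : ℕ) : ℚ) = ((j - k - 1 : ℕ) : ℚ) + 1 by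
        rw [← Nat.cast_add_one, Nat.sub_add_cancel (by omega)]]
      ring
    · rw [if_neg hjl, show min (t - k) (j - k) = j - k by omega]
      ring

/-- difference of successive coordinates on the minus side -/
lemma L3 (ℓ k t j : ℕ) (hkl : k ≤ ℓ) (h2 : 2 ≤ t) (htk : t ≤ k) (hj : j ≤ ℓ) :
    co ℓ k j (t - 1) - co ℓ k j t = if j < t then 1 else 0 := by
  by_cases hjk : j < k
  · rw [co_minus ℓ k j (t-1) hkl hjk (by omega) (by omega)]
    have ht' : co ℓ k j t = ((min (k - t) (k - j) : ℕ) : ℚ) := by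
      by_cases htk' : t = k
      · rw [co_zero_left ℓ k j t hjk (Or.inl (by omega))]
        rw [show min (k - t) (k - j) = 0 by omega]
        simp
      · exact co_minus ℓ k j t hkl hjk (by omega) (by omega)
    rw [ht']
    by_cases hjt : j < t
    · rw [if_pos hjt, show min (k - (t - 1)) (k - j) = min (k - t) (k - j) + 1 by omega]
      push_cast; ring
    · rw [if_neg hjt, show min (k - (t - 1)) (k - j) = min (k - t) (k - j) by omega]
      ring
  · push_neg at hjk
    rw [co_zero_right ℓ k j (t-1) hjk (Or.inl (by omega)),
        co_zero_right ℓ k j t hjk (Or.inl (by omega)), if_neg (by omega)]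
    ring

/-- the bottom equation on the minus side -/
lemma L4 (ℓ k j : ℕ) (hkl : k ≤ ℓ) (h1 : 1 ≤ k) (hj : j ≤ ℓ) :
    2 * co ℓ k j 0 - co ℓ k j 1 = if j = 0 then 1 else 0 := by
  by_cases hjk : j < k
  · rw [co_minus_bot ℓ k j hjk]
    have ht' : co ℓ k j 1 = ((min (k - 1) (k - j) : ℕ) : ℚ) := by
      by_cases hk1 : k = 1
      · rw [co_zero_left ℓ k j 1 hjk (Or.inl (by omega))]
        rw [show min (k - 1) (k - j) = 0 by omega]
        simp
      · exact co_minus ℓ k j 1 hkl hjk (by omega) (by omega)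
    rw [ht']
    by_cases hj0 : j = 0
    · subst hj0
      rw [if_pos rfl, show min (k - 1) (k - 0) = k - 0 - 1 by omega]
      rw [show ((k - 0 : ℕ) : ℚ) = ((k - 0 - 1 : ℕ) : ℚ) + 1 by
        rw [← Nat.cast_add_one, Nat.sub_add_cancel (by omega)]]
      ring
    · rw [if_neg hj0, show min (k - 1) (k - j) = k - j by omega]
      ring
  · push_neg at hjk
    rw [co_zero_right ℓ k j 0 hjk (Or.inl (by omega)),
        co_zero_right ℓ k j 1 hjk (Or.inl (by omega)), if_neg (by omega)]
    ring

/-- main combinatorial lemma: the coordinate equations force all coefficients to vanish -/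
lemma key (ℓ k : ℕ) (hk : k ≤ ℓ) (c : ℕ → ℚ) (hck : c k = 0)
    (H : ∀ t, t ≤ ℓ → ∑ j ∈ Finset.range (ℓ + 1), c j * co ℓ k j t = 0) :
    ∀ j, j ≤ ℓ → c j = 0 := by
  have Splus : ∀ t, k ≤ t → t ≤ ℓ → ∑ j ∈ Finset.Ioc t ℓ, c j = 0 := by
    intro t hkt htl
    rcases Nat.eq_or_lt_of_le htl with rfl | h1
    · simp
    have key2 : ∑ j ∈ Finset.range (ℓ + 1), c j * (if t < j then (1 : ℚ) else 0) = 0 := by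
      rcases Nat.eq_or_lt_of_le (show t + 1 ≤ ℓ by omega) with h2 | h2
      · have := H ℓ le_rfl
        have ht := H t (by omega)
        calc ∑ j ∈ Finset.range (ℓ + 1), c j * (if t < j then (1 : ℚ) else 0)
            = ∑ j ∈ Finset.range (ℓ + 1), c j * (2 * co ℓ k j ℓ - co ℓ k j t) := by
              refine Finset.sum_congr rfl fun j hj => ?_
              rw [Finset.mem_range] at hj
              rw [L2 ℓ k t j hkt h2 (by omega)]
              congr 1
              by_cases hc : j = ℓ
              · rw [if_pos (by omega), if_pos hc]
              · rw [if_neg (by omega), if_neg hc]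
          _ = 2 * (∑ j ∈ Finset.range (ℓ + 1), c j * co ℓ k j ℓ)
              - ∑ j ∈ Finset.range (ℓ + 1), c j * co ℓ k j t := by
              rw [Finset.mul_sum, ← Finset.sum_sub_distrib]
              refine Finset.sum_congr rfl fun j _ => by ring
          _ = 0 := by rw [this, ht]; ring
      · have h3 := H (t + 1) (by omega)
        have ht := H t (by omega)
        calc ∑ j ∈ Finset.range (ℓ + 1), c j * (if t < j then (1 : ℚ) else 0)
            = ∑ j ∈ Finset.range (ℓ + 1), c j * (co ℓ k j (t + 1) - co ℓ k j t) := by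
              refine Finset.sum_congr rfl fun j hj => ?_
              rw [Finset.mem_range] at hj
              rw [L1 ℓ k t j hkt (by omega) (by omega)]
          _ = (∑ j ∈ Finset.range (ℓ + 1), c j * co ℓ k j (t + 1))
              - ∑ j ∈ Finset.range (ℓ + 1), c j * co ℓ k j t := by
              rw [← Finset.sum_sub_distrib]
              refine Finset.sum_congr rfl fun j _ => by ring
          _ = 0 := by rw [h3, ht]; ring
    calc ∑ j ∈ Finset.Ioc t ℓ, c j
        = ∑ j ∈ (Finset.range (ℓ + 1)).filter (fun j => t < j), c j := by
          congr 1
          ext x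
          simp only [Finset.mem_Ioc, Finset.mem_filter, Finset.mem_range]
          omega
      _ = ∑ j ∈ Finset.range (ℓ + 1), c j * (if t < j then (1 : ℚ) else 0) := by
          rw [Finset.sum_filter]
          refine Finset.sum_congr rfl fun j _ => ?_
          split_ifs <;> simp
      _ = 0 := key2
  have Sminus : ∀ t, 1 ≤ t → t ≤ k → ∑ j ∈ Finset.range t, c j = 0 := by
    intro t h1t htk
    have key2 : ∑ j ∈ Finset.range (ℓ + 1), c j * (if j < t then (1 : ℚ) else 0) = 0 := by
      rcases Nat.eq_or_lt_of_le h1t with h2 | h2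
      · have h0 := H 0 (by omega)
        have ho := H 1 (by omega)
        calc ∑ j ∈ Finset.range (ℓ + 1), c j * (if j < t then (1 : ℚ) else 0)
            = ∑ j ∈ Finset.range (ℓ + 1), c j * (2 * co ℓ k j 0 - co ℓ k j 1) := by
              refine Finset.sum_congr rfl fun j hj => ?_
              rw [Finset.mem_range] at hj
              rw [L4 ℓ k j hk (by omega) (by omega)]
              congr 1
              by_cases hc : j = 0
              · rw [if_pos (by omega), if_pos hc]
              · rw [if_neg (by omega), if_neg hc]
          _ = 2 * (∑ j ∈ Finset.range (ℓ + 1), c j * co ℓ k j 0)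
              - ∑ j ∈ Finset.range (ℓ + 1), c j * co ℓ k j 1 := by
              rw [Finset.mul_sum, ← Finset.sum_sub_distrib]
              refine Finset.sum_congr rfl fun j _ => by ring
          _ = 0 := by rw [h0, ho]; ring
      · have h3 := H (t - 1) (by omega)
        have ht := H t (by omega)
        calc ∑ j ∈ Finset.range (ℓ + 1), c j * (if j < t then (1 : ℚ) else 0)
            = ∑ j ∈ Finset.range (ℓ + 1), c j * (co ℓ k j (t - 1) - co ℓ k j t) := by
              refine Finset.sum_congr rfl fun j hj => ?_
              rw [Finset.mem_range] at hj
              rw [L3 ℓ k t j hk (by omega) htk (by omega)]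
          _ = (∑ j ∈ Finset.range (ℓ + 1), c j * co ℓ k j (t - 1))
              - ∑ j ∈ Finset.range (ℓ + 1), c j * co ℓ k j t := by
              rw [← Finset.sum_sub_distrib]
              refine Finset.sum_congr rfl fun j _ => by ring
          _ = 0 := by rw [h3, ht]; ring
    calc ∑ j ∈ Finset.range t, c j
        = ∑ j ∈ (Finset.range (ℓ + 1)).filter (fun j => j < t), c j := by
          congr 1
          ext x
          simp only [Finset.mem_filter, Finset.mem_range]
          omega
      _ = ∑ j ∈ Finset.range (ℓ + 1), c j * (if j < t then (1 : ℚ) else 0) := by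
          rw [Finset.sum_filter]
          refine Finset.sum_congr rfl fun j _ => ?_
          split_ifs <;> simp
      _ = 0 := key2
  intro j hj
  rcases lt_trichotomy j k with h | h | h
  · rcases Nat.eq_zero_or_pos j with rfl | hp
    · have := Sminus 1 le_rfl (by omega)
      simpa using this
    · have h1 := Sminus (j + 1) (by omega) (by omega)
      have h2 := Sminus j (by omega) (by omega)
      rw [Finset.sum_range_succ, h2, zero_add] at h1
      exact h1
  · rw [h]; exact hck
  · have h1 := Splus (j - 1) (by omega) (by omega)
    have h2 := Splus j (by omega) hj
    rw [show Finset.Ioc (j - 1) ℓ = insert j (Finset.Ioc j ℓ) by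
      ext x; simp only [Finset.mem_Ioc, Finset.mem_insert]; omega] at h1
    rw [Finset.sum_insert (by simp), h2, add_zero] at h1
    exact h1

end Stmt3Aux


section Stmt3Proof

open Stmt3Aux

/-- the family {ξ_k^{(±i)} ∣ i ≠ 0, k ± i ∈ {0,…,ℓ}} (indexed by
the endpoint j = k ± i ≠ k) is a basis of the span of {α_j ∣ j ≠ k}. -/
theorem stmt3 (ℓ k : ℕ) (hℓ : 2 ≤ ℓ) (hk : k ≤ ℓ) :
    LinearIndependent ℚ (fun j : {j : Fin (ℓ + 1) // (j : ℕ) ≠ k} =>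
      if (j.1 : ℕ) < k then xiM ℓ k (k - (j.1 : ℕ)) else xiP ℓ k ((j.1 : ℕ) - k)) ∧
    Submodule.span ℚ (Set.range (fun j : {j : Fin (ℓ + 1) // (j : ℕ) ≠ k} =>
        if (j.1 : ℕ) < k then xiM ℓ k (k - (j.1 : ℕ)) else xiP ℓ k ((j.1 : ℕ) - k)))
      = Submodule.span ℚ {v : Wt | ∃ j : Fin (ℓ + 1), (j : ℕ) ≠ k ∧ v = al (j : ℕ)} := by
  set ι := {j : Fin (ℓ + 1) // (j : ℕ) ≠ k}
  set V : ι → Wt := fun j =>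
    if (j.1 : ℕ) < k then xiM ℓ k (k - (j.1 : ℕ)) else xiP ℓ k ((j.1 : ℕ) - k) with hV
  have hVco : ∀ (i : ι) (t : ℕ), (V i).2 t = co ℓ k (i.1 : ℕ) t := by
    intro i t
    rw [hV]
    simp only [co]
  -- linear independence
  have li : LinearIndependent ℚ V := by
    rw [Fintype.linearIndependent_iff]
    intro g hg i
    classical
    set c : ℕ → ℚ := fun j => ∑ i : ι, if (i.1 : ℕ) = j then g i else 0 with hc
    have hci : ∀ i : ι, c (i.1 : ℕ) = g i := by
      intro i
      rw [hc]
      simp only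
      rw [Finset.sum_eq_single i]
      · rw [if_pos rfl]
      · intro i' _ hne
        exact if_neg fun h => hne (Subtype.ext (Fin.ext h))
      · intro h
        exact absurd (Finset.mem_univ i) h
    have hck : c k = 0 := by
      rw [hc]
      exact Finset.sum_eq_zero fun i _ => if_neg i.2
    have H : ∀ t, t ≤ ℓ → ∑ j ∈ Finset.range (ℓ + 1), c j * co ℓ k j t = 0 := by
      intro t _
      have h1 : (∑ i : ι, g i • V i).2 t = 0 := by rw [hg]; rfl
      rw [Prod.snd_sum, Finset.sum_apply] at h1
      have h2 : ∀ i : ι, (g i • V i).2 t = g i * (V i).2 t := fun i => rfl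
      calc ∑ j ∈ Finset.range (ℓ + 1), c j * co ℓ k j t
          = ∑ j ∈ Finset.range (ℓ + 1), ∑ i : ι,
              (if (i.1 : ℕ) = j then g i * co ℓ k j t else 0) := by
            refine Finset.sum_congr rfl fun j _ => ?_
            rw [hc, Finset.sum_mul]
            refine Finset.sum_congr rfl fun i _ => ?_
            rw [ite_mul, zero_mul]
        _ = ∑ i : ι, ∑ j ∈ Finset.range (ℓ + 1),
              (if (i.1 : ℕ) = j then g i * co ℓ k j t else 0) := Finset.sum_comm
        _ = ∑ i : ι, g i * co ℓ k (i.1 : ℕ) t := by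
            refine Finset.sum_congr rfl fun i _ => ?_
            rw [Finset.sum_ite_eq (Finset.range (ℓ + 1)) ((i.1 : ℕ))
              (fun j => g i * co ℓ k j t)]
            rw [if_pos (Finset.mem_range.mpr i.1.isLt)]
        _ = ∑ i : ι, g i * (V i).2 t := by
            refine Finset.sum_congr rfl fun i _ => by rw [hVco]
        _ = 0 := by
            rw [← h1]
            exact Finset.sum_congr rfl fun i _ => (h2 i).symm
    have := key ℓ k hk c hck H (i.1 : ℕ) (by omega)
    rw [hci] at this
    exact this
  refine ⟨li, ?_⟩
  -- spanning
  set αset : Set Wt := {v : Wt | ∃ j : Fin (ℓ + 1), (j : ℕ) ≠ k ∧ v = al (j : ℕ)} with hαs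
  have hmem : ∀ w : Wt, w.1 = 0 → (∀ t, t = k ∨ ℓ < t → w.2 t = 0) →
      w ∈ Submodule.span ℚ αset := by
    intro w h1 h2
    have hw : w = ∑ j ∈ Finset.range (ℓ + 1), w.2 j • al j := by
      refine Prod.ext ?_ ?_
      · rw [h1, Prod.fst_sum]
        symm
        refine Finset.sum_eq_zero fun j _ => ?_
        show w.2 j • (al j).1 = 0
        rw [show (al j).1 = 0 from rfl, smul_zero]
      · funext t
        rw [Prod.snd_sum, Finset.sum_apply]
        have : ∀ j, (w.2 j • al j).2 t = (if t = j then w.2 j else 0) := by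
          intro j
          show w.2 j * (if t = j then (1 : ℚ) else 0) = _
          split_ifs <;> ring
        rw [Finset.sum_congr rfl fun j _ => this j]
        rw [Finset.sum_ite_eq (Finset.range (ℓ + 1)) t (fun j => w.2 j)]
        by_cases ht : t < ℓ + 1
        · rw [if_pos (Finset.mem_range.mpr ht)]
        · rw [if_neg (by simpa using ht), h2 t (Or.inr (by omega))]
    rw [hw]
    refine Submodule.sum_mem _ fun j hj => ?_
    rw [Finset.mem_range] at hj
    by_cases hjk : j = k
    · rw [hjk, h2 k (Or.inl rfl), zero_smul]
      exact Submodule.zero_mem _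
    · exact Submodule.smul_mem _ _ (Submodule.subset_span
        ⟨⟨j, hj⟩, by simpa using hjk, by simp⟩)
  have hle : Submodule.span ℚ (Set.range V) ≤ Submodule.span ℚ αset := by
    rw [Submodule.span_le]
    rintro v ⟨i, rfl⟩
    refine hmem (V i) ?_ ?_
    · rw [hV]
      simp only
      split_ifs <;> rfl
    · intro t ht
      rw [hVco]
      by_cases hik : (i.1 : ℕ) < k
      · exact co_zero_left ℓ k _ t hik (by omega)
      · exact co_zero_right ℓ k _ t (by omega) (by omega)
  -- the α's as a family over ι
  set A : ι → Wt := fun j => al (j.1 : ℕ) with hA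
  have hαr : αset = Set.range A := by
    ext v
    constructor
    · rintro ⟨j, hj, rfl⟩; exact ⟨⟨j, hj⟩, rfl⟩
    · rintro ⟨i, rfl⟩; exact ⟨i.1, i.2, rfl⟩
  have liA : LinearIndependent ℚ A := by
    rw [Fintype.linearIndependent_iff]
    intro g hg i
    have h1 : (∑ i : ι, g i • A i).2 (i.1 : ℕ) = 0 := by rw [hg]; rfl
    rw [Prod.snd_sum, Finset.sum_apply] at h1
    have h2 : ∑ i' : ι, (g i' • A i').2 (i.1 : ℕ) = g i := by
      rw [Finset.sum_eq_single i]
      · show g i * (if (i.1 : ℕ) = (i.1 : ℕ) then (1 : ℚ) else 0) = g i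
        rw [if_pos rfl, mul_one]
      · intro i' _ hne
        show g i' * (if (i.1 : ℕ) = (i'.1 : ℕ) then (1 : ℚ) else 0) = 0
        rw [if_neg fun h => hne (Subtype.ext (Fin.ext h.symm)), mul_zero]
      · intro h
        exact absurd (Finset.mem_univ i) h
    rw [h2] at h1
    exact h1
  have hcard : Fintype.card ι = ℓ := by
    have h1 : Fintype.card {j : Fin (ℓ + 1) // (j : ℕ) = k} = 1 := by
      rw [Fintype.card_eq_one_iff]
      exact ⟨⟨⟨k, by omega⟩, rfl⟩, fun y => Subtype.ext (Fin.ext (by simpa using y.2))⟩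
    have h2 := Fintype.card_subtype_compl (fun j : Fin (ℓ + 1) => (j : ℕ) = k)
    rw [h1, Fintype.card_fin] at h2
    exact h2
  have hfin : FiniteDimensional ℚ (Submodule.span ℚ αset) := by
    rw [hαr]
    exact FiniteDimensional.span_of_finite ℚ (Set.finite_range A)
  have hfr1 : Module.finrank ℚ (Submodule.span ℚ (Set.range V)) = ℓ := by
    rw [finrank_span_eq_card li, hcard]
  have hfr2 : Module.finrank ℚ (Submodule.span ℚ αset) = ℓ := by
    rw [hαr, finrank_span_eq_card liA, hcard]
  exact Submodule.eq_of_le_of_finrank_le hle (by rw [hfr1, hfr2])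

end Stmt3Proof
end

section
/- Let $\ell \ge 2$, $k \in \{0,\dots,\ell\}$, $i \ge 0$ even with $k+i \le \ell$ (resp. $k - i \ge 0$), and $m \ge i/2$. Then the defect $\mathrm{def}_{\Lambda_k}(m\delta - \xi_k^{(i)})$ (resp. $\mathrm{def}_{\Lambda_k}(m\delta - \xi_k^{(-i)})$) equals $2m - i/2$. -/
open scoped BigOperators

lemma cartan_eq (ℓ a b : ℕ) (hℓ : 2 ≤ ℓ) (ha : a ≤ ℓ) (hb : b ≤ ℓ) :
    cartanC ℓ a b = if a = b then 2 else if b + 1 = a ∨ b = a + 1 then -dC ℓ b else 0 := by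
  unfold cartanC dC
  split_ifs <;> (try norm_num) <;> omega

lemma row_eq (ℓ a : ℕ) (hℓ : 2 ≤ ℓ) (ha : a ≤ ℓ) (w : ℕ → ℚ) :
    ∑ b ∈ Finset.range (ℓ+1), cartanC ℓ a b * w b
      = 2 * w a - (if 1 ≤ a then dC ℓ (a-1) * w (a-1) else 0)
        - (if a < ℓ then dC ℓ (a+1) * w (a+1) else 0) := by
  have key : ∀ b ∈ Finset.range (ℓ+1), cartanC ℓ a b * w b =
      (if b = a then 2 * w b else 0)
      + (if 1 ≤ a then (if b = a - 1 then -dC ℓ b * w b else 0) else 0)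
      + (if a < ℓ then (if b = a + 1 then -dC ℓ b * w b else 0) else 0) := by
    intro b hb
    have hb' : b ≤ ℓ := Nat.lt_succ_iff.mp (Finset.mem_range.mp hb)
    rw [cartan_eq ℓ a b hℓ ha (Nat.lt_succ_iff.mp (Finset.mem_range.mp hb))]
    split_ifs <;> (try ring) <;> omega
  rw [Finset.sum_congr rfl key]
  rw [Finset.sum_add_distrib, Finset.sum_add_distrib]
  rw [Finset.sum_ite_eq' (Finset.range (ℓ+1)) a (fun b => 2 * w b)]
  by_cases h1 : 1 ≤ a <;> by_cases h2 : a < ℓ <;>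
    simp only [h1, h2, if_true, if_false, Finset.sum_ite_eq', Finset.sum_const_zero,
      Finset.mem_range] <;>
    rw [if_pos (by omega)] <;>
    (try rw [if_pos (by omega)]) <;> (try rw [if_pos (by omega)]) <;> ring

lemma form_sq (ℓ : ℕ) (hℓ : 2 ≤ ℓ) (v w : Wt) (hv : v.1 = 0) (hw : w.1 = 0) :
    formC ℓ v w = ∑ t ∈ Finset.range ℓ,
      (dC ℓ (t+1) * v.2 (t+1) - dC ℓ t * v.2 t)
      * (dC ℓ (t+1) * w.2 (t+1) - dC ℓ t * w.2 t) := by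
  set D : ℕ → ℚ := fun a => dC ℓ a * v.2 a with hD
  set W : ℕ → ℚ := fun a => dC ℓ a * w.2 a with hW
  have hform : formC ℓ v w = ∑ a ∈ Finset.range (ℓ+1), (v.2 a * dC ℓ a) *
      ∑ b ∈ Finset.range (ℓ+1), cartanC ℓ a b * w.2 b := by
    unfold formC
    rw [hv, hw]
    simp [Finset.mul_sum, mul_assoc]
  rw [hform]
  have hrow : ∀ a ∈ Finset.range (ℓ+1), (v.2 a * dC ℓ a) *
      (∑ b ∈ Finset.range (ℓ+1), cartanC ℓ a b * w.2 b)
      = 2 * (dC ℓ a * v.2 a * w.2 a)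
        - (if 1 ≤ a then D a * W (a-1) else 0)
        - (if a < ℓ then D a * W (a+1) else 0) := by
    intro a hb
    rw [row_eq ℓ a hℓ (Nat.lt_succ_iff.mp (Finset.mem_range.mp hb)) w.2]
    simp only [hD, hW, mul_ite, mul_zero]
    split_ifs <;> ring
  rw [Finset.sum_congr rfl hrow]
  rw [Finset.sum_sub_distrib, Finset.sum_sub_distrib]
  -- diagonal part
  have hdiag : ∑ a ∈ Finset.range (ℓ+1), 2 * (dC ℓ a * v.2 a * w.2 a)
      = 2 * (∑ a ∈ Finset.range (ℓ+1), D a * W a) - D 0 * W 0 - D ℓ * W ℓ := by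
    have hpt : ∀ a ∈ Finset.range (ℓ+1),
        2 * (dC ℓ a * v.2 a * w.2 a)
        = 2 * (D a * W a) - (if a = 0 then D a * W a else 0)
          - (if a = ℓ then D a * W a else 0) := by
      intro a _
      simp only [hD, hW, dC]
      have h0l : ¬ ((0:ℕ) = ℓ) := by omega
      have hl0 : ¬ (ℓ = 0) := by omega
      by_cases h0 : a = 0 <;> by_cases hl : a = ℓ <;>
        simp [h0, hl, h0l, hl0] <;> first | omega | ring
    rw [Finset.sum_congr rfl hpt, Finset.sum_sub_distrib, Finset.sum_sub_distrib,
      Finset.sum_ite_eq' (Finset.range (ℓ+1)) 0 (fun a => D a * W a),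
      Finset.sum_ite_eq' (Finset.range (ℓ+1)) ℓ (fun a => D a * W a),
      if_pos (Finset.mem_range.mpr (by omega)), if_pos (Finset.mem_range.mpr (by omega)),
      Finset.mul_sum]
  rw [hdiag]
  -- subdiagonal part
  have hsub : ∑ a ∈ Finset.range (ℓ+1), (if 1 ≤ a then D a * W (a-1) else 0)
      = ∑ t ∈ Finset.range ℓ, D (t+1) * W t := by
    rw [Finset.sum_range_succ']
    simp
  -- superdiagonal part
  have hsup : ∑ a ∈ Finset.range (ℓ+1), (if a < ℓ then D a * W (a+1) else 0)
      = ∑ t ∈ Finset.range ℓ, D t * W (t+1) := by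
    rw [Finset.sum_range_succ]
    simp only [lt_irrefl, if_false, add_zero]
    exact Finset.sum_congr rfl fun a ha => if_pos (Finset.mem_range.mp ha)
  rw [hsub, hsup]
  have hexp : ∀ t ∈ Finset.range ℓ,
      (D (t+1) - D t) * (W (t+1) - W t)
      = (D (t+1) * W (t+1) + D t * W t) - D (t+1) * W t - D t * W (t+1) := by
    intro t _; ring
  rw [Finset.sum_congr rfl hexp, Finset.sum_sub_distrib, Finset.sum_sub_distrib,
    Finset.sum_add_distrib]
  have h1 : ∑ t ∈ Finset.range ℓ, D (t+1) * W (t+1)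
      = (∑ a ∈ Finset.range (ℓ+1), D a * W a) - D 0 * W 0 := by
    rw [Finset.sum_range_succ']; ring
  have h2 : ∑ t ∈ Finset.range ℓ, D t * W t
      = (∑ a ∈ Finset.range (ℓ+1), D a * W a) - D ℓ * W ℓ := by
    rw [Finset.sum_range_succ]; ring
  rw [h1, h2]; ring

lemma form_lam (ℓ k : ℕ) (hk : k ≤ ℓ) (w : Wt) (hw : w.1 = 0) :
    formC ℓ (Lam k) w = dC ℓ k * w.2 k := by
  unfold formC Lam
  rw [hw]
  simp only [Pi.zero_apply, zero_mul, mul_zero, Finset.sum_const_zero, add_zero, zero_add]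
  have : ∀ j ∈ Finset.range (ℓ+1),
      (if j = k then (1:ℚ) else 0) * dC ℓ j * w.2 j
      = (if j = k then dC ℓ j * w.2 j else 0) := by
    intro j _; split_ifs <;> ring
  rw [Finset.sum_congr rfl this,
    Finset.sum_ite_eq' (Finset.range (ℓ+1)) k (fun j => dC ℓ j * w.2 j),
    if_pos (Finset.mem_range.mpr (by omega))]

lemma qle {x y : ℕ} (h : x ≤ y) : (x:ℚ) ≤ y := by exact_mod_cast h

lemma d_delta (ℓ a : ℕ) (hℓ : 2 ≤ ℓ) (ha : a ≤ ℓ) :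
    dC ℓ a * (deltaC ℓ).2 a = 2 := by
  simp only [dC, deltaC]
  split_ifs <;> (try norm_num) <;> omega

lemma d_xiP (ℓ k i a : ℕ) (hki : k + i ≤ ℓ) (ha : a ≤ ℓ) :
    dC ℓ a * (xiP ℓ k i).2 a = if a ≤ k then 0 else min ((a:ℚ) - k) i := by
  rcases Nat.lt_or_ge k a with hka | hka
  · have h2 : ¬(a ≤ k ∨ ℓ < a) := by omega
    rw [if_neg (show ¬ a ≤ k by omega)]
    rcases eq_or_ne a ℓ with hal | hne
    · have hmin : min ((a:ℚ) - (k:ℚ)) (i:ℚ) = (i:ℚ) := by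
        apply min_eq_right
        have h := qle (show k + i ≤ a by omega)
        push_cast at h
        linarith
      have hx : (xiP ℓ k i).2 a = (i:ℚ)/2 := by
        simp only [xiP]; rw [if_neg h2, if_pos hal]
      have hd : dC ℓ a = 2 := by
        simp only [dC]; rw [if_pos (Or.inr hal)]
      rw [hx, hd, hmin]; ring
    · have hx : (xiP ℓ k i).2 a = min ((a:ℚ) - k) i := by
        simp only [xiP]; rw [if_neg h2, if_neg hne]
      have hd : dC ℓ a = 1 := by
        simp only [dC]; rw [if_neg]; omega
      rw [hx, hd, one_mul]
  · have hx : (xiP ℓ k i).2 a = 0 := by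
      simp only [xiP]; rw [if_pos (Or.inl hka)]
    rw [hx, mul_zero, if_pos hka]

lemma d_xiM (ℓ k i a : ℕ) (hik : i ≤ k) (hk : k ≤ ℓ) (ha : a ≤ ℓ) :
    dC ℓ a * (xiM ℓ k i).2 a = if k ≤ a then 0 else min ((k:ℚ) - a) i := by
  rcases Nat.lt_or_ge a k with hka | hka
  · have h2 : ¬(k ≤ a ∨ ℓ < a) := by omega
    rw [if_neg (show ¬ k ≤ a by omega)]
    rcases eq_or_ne a 0 with ha0 | hne
    · have hmin : min ((k:ℚ) - (a:ℚ)) (i:ℚ) = (i:ℚ) := by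
        apply min_eq_right
        have h := qle (show a + i ≤ k by omega)
        push_cast at h
        linarith
      have hx : (xiM ℓ k i).2 a = (i:ℚ)/2 := by
        simp only [xiM]; rw [if_neg h2, if_pos ha0]
      have hd : dC ℓ a = 2 := by
        simp only [dC]; rw [if_pos (Or.inl ha0)]
      rw [hx, hd, hmin]; ring
    · have hx : (xiM ℓ k i).2 a = min ((k:ℚ) - a) i := by
        simp only [xiM]; rw [if_neg h2, if_neg hne]
      have hd : dC ℓ a = 1 := by
        simp only [dC]; rw [if_neg]; omega
      rw [hx, hd, one_mul]
  · have hx : (xiM ℓ k i).2 a = 0 := by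
      simp only [xiM]; rw [if_pos (Or.inl hka)]
    rw [hx, mul_zero, if_pos hka]

lemma stepP (k i t : ℕ) :
    (if t+1 ≤ k then (0:ℚ) else min (((t:ℚ)+1) - k) i)
      - (if t ≤ k then 0 else min ((t:ℚ) - k) i)
    = if k ≤ t ∧ t < k + i then 1 else 0 := by
  rcases Nat.lt_or_ge t k with h | h
  · rw [if_pos (show t+1 ≤ k by omega), if_pos (show t ≤ k by omega),
      if_neg (show ¬(k ≤ t ∧ t < k+i) by omega)]
    ring
  · have e1 : ¬ (t+1 ≤ k) := by omega
    rcases Nat.lt_or_ge t (k+i) with h2 | h2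
    · have hm1 : min (((t:ℚ)+1) - k) i = ((t:ℚ)+1) - k := min_eq_left (by
        have := qle (show t + 1 ≤ k + i by omega); push_cast at this; linarith)
      rcases eq_or_ne t k with h3 | h3
      · have hc : (t:ℚ) = k := by exact_mod_cast h3
        rw [if_neg e1, if_pos (show t ≤ k by omega),
          if_pos (show k ≤ t ∧ t < k+i from ⟨h, h2⟩), hm1, hc]
        ring
      · have hm2 : min ((t:ℚ) - k) i = (t:ℚ) - k := min_eq_left (by
          have := qle (show t ≤ k + i by omega); push_cast at this; linarith)
        rw [if_neg e1, if_neg (show ¬ t ≤ k by omega),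
          if_pos (show k ≤ t ∧ t < k+i from ⟨h, h2⟩), hm1, hm2]
        ring
    · have hm1 : min (((t:ℚ)+1) - k) i = (i:ℚ) := min_eq_right (by
        have := qle (show k + i ≤ t + 1 by omega); push_cast at this; linarith)
      have hrhs : ¬(k ≤ t ∧ t < k+i) := by omega
      rcases eq_or_ne t k with h3 | h3
      · have hi0 : i = 0 := by omega
        have hc : (t:ℚ) = k := by exact_mod_cast h3
        rw [if_neg e1, if_pos (show t ≤ k by omega), if_neg hrhs, hm1, hi0]
        norm_num
      · have hm2 : min ((t:ℚ) - k) i = (i:ℚ) := min_eq_right (by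
          have := qle (show k + i ≤ t by omega); push_cast at this; linarith)
        rw [if_neg e1, if_neg (show ¬ t ≤ k by omega), if_neg hrhs, hm1, hm2]
        ring

lemma stepM (k i t : ℕ) :
    (if k ≤ t then (0:ℚ) else min ((k:ℚ) - t) i)
      - (if k ≤ t+1 then 0 else min ((k:ℚ) - ((t:ℚ)+1)) i)
    = (if k ≤ t + i ∧ t < k then 1 else 0) := by
  rcases Nat.lt_or_ge t k with h | h
  swap
  · rw [if_pos h, if_pos (show k ≤ t+1 by omega),
      if_neg (show ¬(k ≤ t+i ∧ t < k) by omega)]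
    ring
  · have e1 : ¬ (k ≤ t) := by omega
    rcases Nat.lt_or_ge (t+i) k with h2 | h2
    · have hrhs : ¬(k ≤ t+i ∧ t < k) := by omega
      have hm1 : min ((k:ℚ) - t) i = (i:ℚ) := min_eq_right (by
        have := qle (show t + i ≤ k by omega); push_cast at this; linarith)
      rcases eq_or_ne (t+1) k with h3 | h3
      · have hi0 : i = 0 := by omega
        rw [if_neg e1, if_pos (show k ≤ t+1 by omega), if_neg hrhs, hm1, hi0]
        norm_num
      · have hm2 : min ((k:ℚ) - ((t:ℚ)+1)) i = (i:ℚ) := min_eq_right (by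
          have := qle (show t + 1 + i ≤ k by omega); push_cast at this; linarith)
        rw [if_neg e1, if_neg (show ¬ k ≤ t+1 by omega), if_neg hrhs, hm1, hm2]
        ring
    · have hm1 : min ((k:ℚ) - t) i = (k:ℚ) - t := min_eq_left (by
        have := qle (show k ≤ t + i by omega); push_cast at this; linarith)
      rcases eq_or_ne (t+1) k with h3 | h3
      · have hc : (k:ℚ) = (t:ℚ)+1 := by exact_mod_cast h3.symm
        rw [if_neg e1, if_pos (show k ≤ t+1 by omega),
          if_pos (show k ≤ t+i ∧ t < k from ⟨h2, h⟩), hm1, hc]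
        ring
      · have hm2 : min ((k:ℚ) - ((t:ℚ)+1)) i = (k:ℚ) - ((t:ℚ)+1) := min_eq_left (by
          have := qle (show k ≤ t + 1 + i by omega); push_cast at this; linarith)
        rw [if_neg e1, if_neg (show ¬ k ≤ t+1 by omega),
          if_pos (show k ≤ t+i ∧ t < k from ⟨h2, h⟩), hm1, hm2]
        ring

lemma sum_ind (ℓ a b : ℕ) (hb : b ≤ ℓ) (hab : a ≤ b) :
    ∑ t ∈ Finset.range ℓ, (if a ≤ t ∧ t < b then (1:ℚ) else 0) = ((b - a : ℕ) : ℚ) := by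
  have h : ∀ t ∈ Finset.range ℓ, (if a ≤ t ∧ t < b then (1:ℚ) else 0)
      = if t ∈ Finset.Ico a b then 1 else 0 := by
    intro t _; simp [Finset.mem_Ico]
  rw [Finset.sum_congr rfl h, Finset.sum_ite_mem,
    Finset.inter_eq_right.mpr (by
      intro t ht
      rw [Finset.mem_range]
      rw [Finset.mem_Ico] at ht
      omega),
    Finset.sum_const, Nat.card_Ico]
  simp

/-- def_{Λ_k}(mδ − ξ_k^{(±i)}) = 2m − i/2 for i ≥ 0 even, m ≥ i/2. -/
theorem stmt4 (ℓ k i m : ℕ) (hℓ : 2 ≤ ℓ) (hk : k ≤ ℓ) (hev : Even i)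
    (hm : i ≤ 2 * m) :
    (k + i ≤ ℓ →
      defC ℓ k (m • deltaC ℓ - xiP ℓ k i) = 2 * (m : ℚ) - (i : ℚ) / 2) ∧
    (i ≤ k →
      defC ℓ k (m • deltaC ℓ - xiM ℓ k i) = 2 * (m : ℚ) - (i : ℚ) / 2) := by
  constructor
  · intro hki
    set β := m • deltaC ℓ - xiP ℓ k i with hβ
    have hβ1 : β.1 = 0 := by
      simp [hβ, deltaC, xiP]
    have hβc : ∀ a, a ≤ ℓ → dC ℓ a * β.2 a
        = 2*(m:ℚ) - (if a ≤ k then 0 else min ((a:ℚ) - k) i) := by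
      intro a ha
      have h2 : β.2 a = (m:ℚ) * (deltaC ℓ).2 a - (xiP ℓ k i).2 a := by
        simp [hβ, nsmul_eq_mul]
      rw [h2, mul_sub, show dC ℓ a * ((m:ℚ) * (deltaC ℓ).2 a)
          = (m:ℚ) * (dC ℓ a * (deltaC ℓ).2 a) from by ring,
        d_delta ℓ a hℓ ha, d_xiP ℓ k i a hki ha]
      ring
    have hE : ∀ t ∈ Finset.range ℓ,
        (dC ℓ (t+1) * β.2 (t+1) - dC ℓ t * β.2 t)
        = -(if k ≤ t ∧ t < k+i then (1:ℚ) else 0) := by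
      intro t ht
      have ht' := Finset.mem_range.mp ht
      rw [hβc (t+1) (by omega), hβc t (by omega)]
      have hs := stepP k i t
      push_cast
      push_cast at hs
      linarith
    have hForm : formC ℓ β β = (i:ℚ) := by
      rw [form_sq ℓ hℓ β β hβ1 hβ1]
      have hsq : ∀ t ∈ Finset.range ℓ,
          (dC ℓ (t+1) * β.2 (t+1) - dC ℓ t * β.2 t)
            * (dC ℓ (t+1) * β.2 (t+1) - dC ℓ t * β.2 t)
          = (if k ≤ t ∧ t < k+i then (1:ℚ) else 0) := by
        intro t ht
        rw [hE t ht]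
        split_ifs <;> norm_num
      rw [Finset.sum_congr rfl hsq, sum_ind ℓ k (k+i) hki (by omega)]
      congr 1
      omega
    have hLam : formC ℓ (Lam k) β = 2*(m:ℚ) := by
      rw [form_lam ℓ k hk β hβ1, hβc k hk, if_pos le_rfl]
      ring
    unfold defC
    rw [hLam, hForm]
  · intro hik
    set β := m • deltaC ℓ - xiM ℓ k i with hβ
    have hβ1 : β.1 = 0 := by
      simp [hβ, deltaC, xiM]
    have hβc : ∀ a, a ≤ ℓ → dC ℓ a * β.2 a
        = 2*(m:ℚ) - (if k ≤ a then 0 else min ((k:ℚ) - a) i) := by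
      intro a ha
      have h2 : β.2 a = (m:ℚ) * (deltaC ℓ).2 a - (xiM ℓ k i).2 a := by
        simp [hβ, nsmul_eq_mul]
      rw [h2, mul_sub, show dC ℓ a * ((m:ℚ) * (deltaC ℓ).2 a)
          = (m:ℚ) * (dC ℓ a * (deltaC ℓ).2 a) from by ring,
        d_delta ℓ a hℓ ha, d_xiM ℓ k i a hik hk ha]
      ring
    have hE : ∀ t ∈ Finset.range ℓ,
        (dC ℓ (t+1) * β.2 (t+1) - dC ℓ t * β.2 t)
        = (if k ≤ t+i ∧ t < k then (1:ℚ) else 0) := by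
      intro t ht
      have ht' := Finset.mem_range.mp ht
      rw [hβc (t+1) (by omega), hβc t (by omega)]
      have hs := stepM k i t
      push_cast
      push_cast at hs
      linarith
    have hForm : formC ℓ β β = (i:ℚ) := by
      rw [form_sq ℓ hℓ β β hβ1 hβ1]
      have hsq : ∀ t ∈ Finset.range ℓ,
          (dC ℓ (t+1) * β.2 (t+1) - dC ℓ t * β.2 t)
            * (dC ℓ (t+1) * β.2 (t+1) - dC ℓ t * β.2 t)
          = (if k - i ≤ t ∧ t < k then (1:ℚ) else 0) := by
        intro t ht
        rw [hE t ht]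
        by_cases hc : k ≤ t + i ∧ t < k
        · rw [if_pos hc, if_pos (by omega)]
          norm_num
        · rw [if_neg hc, if_neg (by omega)]
          norm_num
      rw [Finset.sum_congr rfl hsq, sum_ind ℓ (k-i) k hk (by omega)]
      congr 1
      omega
    have hLam : formC ℓ (Lam k) β = 2*(m:ℚ) := by
      rw [form_lam ℓ k hk β hβ1, hβc k hk, if_pos le_rfl]
      ring
    unfold defC
    rw [hLam, hForm]
end

section
/- In type $C^{(1)}_\ell$, for $i>0$ even with $k \pm i \in \{0,\dots,\ell\}$, one has $(\xi_k^{(\pm i)}, \xi_k^{(\pm i)}) = i$ and $(\Lambda_k, \xi_k^{(\pm i)}) = 0$. -/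
open scoped BigOperators

section stmt6aux

variable {ℓ k i : ℕ}

lemma cart_diag (j : ℕ) : cartanC ℓ j j = 2 := by simp [cartanC]

lemma cart_off (hℓ : 2 ≤ ℓ) {j m : ℕ} (hj : j ≤ ℓ) (hm : m ≤ ℓ)
    (h : m + 1 < j ∨ j + 1 < m) : cartanC ℓ j m = 0 := by
  unfold cartanC; split_ifs <;> first | rfl | (exfalso; omega) | (exfalso; tauto)

lemma cart_right (hℓ : 2 ≤ ℓ) {j : ℕ} (hj : j ≤ ℓ - 2) : cartanC ℓ j (j+1) = -1 := by
  unfold cartanC; split_ifs <;> first | rfl | (exfalso; omega) | (exfalso; tauto)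

lemma cart_left (hℓ : 2 ≤ ℓ) {j : ℕ} (h2 : 2 ≤ j) (hj : j ≤ ℓ) : cartanC ℓ j (j-1) = -1 := by
  unfold cartanC; split_ifs <;> first | rfl | (exfalso; omega) | (exfalso; tauto)

lemma row_mid (hℓ : 2 ≤ ℓ) (c : ℕ → ℚ) {j : ℕ} (hj1 : 1 ≤ j) (hj2 : j ≤ ℓ - 1) :
    ∑ m ∈ Finset.range (ℓ+1), cartanC ℓ j m * c m
      = cartanC ℓ j (j-1) * c (j-1) + 2 * c j + cartanC ℓ j (j+1) * c (j+1) := by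
  have hsub : ({j-1, j, j+1} : Finset ℕ) ⊆ Finset.range (ℓ+1) := by
    intro x hx
    simp only [Finset.mem_insert, Finset.mem_singleton] at hx
    simp only [Finset.mem_range]; omega
  have key : ∑ m ∈ ({j-1, j, j+1} : Finset ℕ), cartanC ℓ j m * c m
      = ∑ m ∈ Finset.range (ℓ+1), cartanC ℓ j m * c m := by
    apply Finset.sum_subset hsub
    intro x hx hx'
    simp only [Finset.mem_range] at hx
    simp only [Finset.mem_insert, Finset.mem_singleton] at hx'
    rw [cart_off hℓ (by omega) (by omega) (by omega), zero_mul]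
  rw [← key, Finset.sum_insert (by simp only [Finset.mem_insert, Finset.mem_singleton]; omega),
    Finset.sum_insert (by simp only [Finset.mem_singleton]; omega),
    Finset.sum_singleton, cart_diag]
  ring

lemma row_0 (hℓ : 2 ≤ ℓ) (c : ℕ → ℚ) :
    ∑ m ∈ Finset.range (ℓ+1), cartanC ℓ 0 m * c m = 2 * c 0 - c 1 := by
  have hsub : ({0, 1} : Finset ℕ) ⊆ Finset.range (ℓ+1) := by
    intro x hx
    simp only [Finset.mem_insert, Finset.mem_singleton] at hx
    simp only [Finset.mem_range]; omega
  have key : ∑ m ∈ ({0, 1} : Finset ℕ), cartanC ℓ 0 m * c m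
      = ∑ m ∈ Finset.range (ℓ+1), cartanC ℓ 0 m * c m := by
    apply Finset.sum_subset hsub
    intro x hx hx'
    simp only [Finset.mem_range] at hx
    simp only [Finset.mem_insert, Finset.mem_singleton] at hx'
    rw [cart_off hℓ (by omega) (by omega) (by omega), zero_mul]
  have h01 : cartanC ℓ 0 1 = -1 := by
    unfold cartanC; split_ifs <;> first | rfl | (exfalso; omega) | (exfalso; tauto)
  rw [← key, Finset.sum_insert (by simp only [Finset.mem_singleton]; omega),
    Finset.sum_singleton, cart_diag, h01]
  ring

lemma row_l (hℓ : 2 ≤ ℓ) (c : ℕ → ℚ) :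
    ∑ m ∈ Finset.range (ℓ+1), cartanC ℓ ℓ m * c m = 2 * c ℓ - c (ℓ-1) := by
  have hsub : ({ℓ-1, ℓ} : Finset ℕ) ⊆ Finset.range (ℓ+1) := by
    intro x hx
    simp only [Finset.mem_insert, Finset.mem_singleton] at hx
    simp only [Finset.mem_range]; omega
  have key : ∑ m ∈ ({ℓ-1, ℓ} : Finset ℕ), cartanC ℓ ℓ m * c m
      = ∑ m ∈ Finset.range (ℓ+1), cartanC ℓ ℓ m * c m := by
    apply Finset.sum_subset hsub
    intro x hx hx'
    simp only [Finset.mem_range] at hx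
    simp only [Finset.mem_insert, Finset.mem_singleton] at hx'
    rw [cart_off hℓ (by omega) (by omega) (by omega), zero_mul]
  have hll : cartanC ℓ ℓ (ℓ-1) = -1 := by
    unfold cartanC; split_ifs <;> first | rfl | (exfalso; omega) | (exfalso; tauto)
  rw [← key, Finset.sum_insert (by simp only [Finset.mem_singleton]; omega),
    Finset.sum_singleton, cart_diag, hll]
  ring

lemma xiP_zero {m : ℕ} (h : m ≤ k) : (xiP ℓ k i).2 m = 0 := by
  unfold xiP; simp only
  rw [if_pos (Or.inl h)]

lemma xiP_min (hℓ : 1 ≤ ℓ) {m : ℕ} (h1 : k ≤ m) (h2 : m ≤ ℓ - 1) :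
    (xiP ℓ k i).2 m = min ((m:ℚ) - k) i := by
  rcases eq_or_lt_of_le h1 with h | h
  · rw [xiP_zero (le_of_eq h.symm)]
    have hm : (m:ℚ) - k = 0 := by rw [← h]; ring
    rw [hm, min_eq_left (by positivity)]
  · unfold xiP; simp only
    rw [if_neg (by omega), if_neg (by omega)]

lemma xiP_top (hk : k < ℓ) : (xiP ℓ k i).2 ℓ = (i:ℚ)/2 := by
  unfold xiP; simp only
  rw [if_neg (by omega)]
  simp

lemma termR (hℓ : 2 ≤ ℓ) (hki : k + i ≤ ℓ) {j : ℕ} (hkj : k ≤ j) (hj : j ≤ ℓ - 1) :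
    cartanC ℓ j (j+1) * (xiP ℓ k i).2 (j+1) = -min ((j:ℚ) + 1 - k) i := by
  by_cases h : j + 1 = ℓ
  · rw [h, xiP_top (by omega)]
    have hc : cartanC ℓ j ℓ = -2 := by
      unfold cartanC; split_ifs <;> first | rfl | (exfalso; omega) | (exfalso; tauto)
    rw [hc]
    have hki' : (k:ℚ) + i ≤ ℓ := by exact_mod_cast hki
    have hj' : (j:ℚ) + 1 = ℓ := by exact_mod_cast h
    rw [min_eq_right (by linarith)]
    ring
  · rw [cart_right hℓ (by omega), xiP_min (by omega) (by omega) (by omega)]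
    have hc : ((j+1:ℕ):ℚ) = (j:ℚ) + 1 := by push_cast; ring
    rw [hc]; ring

lemma termL (hℓ : 2 ≤ ℓ) {j : ℕ} (hkj : k + 1 ≤ j) (hj : j ≤ ℓ - 1) :
    cartanC ℓ j (j-1) * (xiP ℓ k i).2 (j-1) = -min ((j:ℚ) - 1 - k) i := by
  rcases eq_or_lt_of_le hkj with h | h
  · rw [xiP_zero (by omega), mul_zero]
    have hj' : (j:ℚ) = (k:ℚ) + 1 := by exact_mod_cast h.symm
    have hm : (j:ℚ) - 1 - k = 0 := by linarith
    rw [hm, min_eq_left (by positivity)]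
    ring
  · rw [cart_left hℓ (by omega) (by omega), xiP_min (by omega) (by omega) (by omega)]
    have hc : ((j-1:ℕ):ℚ) = (j:ℚ) - 1 := by
      rw [Nat.cast_sub (by omega)]; norm_num
    rw [hc]; ring

lemma xiP_row (hℓ : 2 ≤ ℓ) (hi : 2 ≤ i) (hki : k + i ≤ ℓ) {j : ℕ} (hj : j ≤ ℓ) :
    ∑ m ∈ Finset.range (ℓ+1), cartanC ℓ j m * (xiP ℓ k i).2 m
      = (if j = k then -1 else 0) + (if j = k + i then 1 else 0) := by
  have hi0 : (0:ℚ) ≤ (i:ℚ) := by positivity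
  have hiq : (2:ℚ) ≤ (i:ℚ) := by exact_mod_cast hi
  have hkiq : (k:ℚ) + i ≤ ℓ := by exact_mod_cast hki
  by_cases hjl : j = ℓ
  · rw [hjl, row_l hℓ, xiP_top (by omega), xiP_min (by omega) (by omega) (by omega)]
    have hc : ((ℓ-1:ℕ):ℚ) = (ℓ:ℚ) - 1 := by rw [Nat.cast_sub (by omega)]; norm_num
    rw [hc]
    by_cases he : k + i = ℓ
    · have heq : (k:ℚ) + i = ℓ := by exact_mod_cast he
      rw [if_neg (by omega), if_pos (by omega), min_eq_left (by linarith)]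
      linarith
    · rw [if_neg (by omega), if_neg (by omega), min_eq_right (by linarith [show (k:ℚ) + i + 1 ≤ ℓ from by exact_mod_cast (by omega : k + i + 1 ≤ ℓ)])]
      ring
  · by_cases hjk : j < k
    · by_cases hj0 : j = 0
      · subst hj0
        rw [row_0 hℓ, xiP_zero (by omega), xiP_zero (by omega),
          if_neg (by omega), if_neg (by omega)]
        ring
      · rw [row_mid hℓ _ (by omega) (by omega), xiP_zero (by omega), xiP_zero (by omega),
          xiP_zero (by omega), if_neg (by omega), if_neg (by omega)]
        ring
    · -- k ≤ j < ℓ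
      by_cases hj0 : j = 0
      · have hk0 : k = 0 := by omega
        rw [hj0, row_0 hℓ, xiP_zero (by omega), xiP_min (by omega) (by omega) (by omega),
          if_pos (by omega), if_neg (by omega)]
        have hkq : (k:ℚ) = 0 := by exact_mod_cast hk0
        rw [show ((1:ℕ):ℚ) = 1 from by norm_num, hkq,
          show (1:ℚ) - 0 = 1 from by ring, min_eq_left (by linarith)]
        norm_num
      · -- 1 ≤ j ≤ ℓ-1, k ≤ j
        rw [row_mid hℓ _ (by omega) (by omega),
          xiP_min (by omega) (by omega : k ≤ j) (by omega),
          termR hℓ hki (by omega) (by omega)]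
        by_cases hje : j = k
        · rw [hje] at *
          rw [xiP_zero (by omega), mul_zero,
            show (k:ℚ) - (k:ℚ) = 0 from by ring, min_eq_left hi0,
            show (k:ℚ) + 1 - (k:ℚ) = 1 from by ring, min_eq_left (by linarith),
            if_pos rfl, if_neg (by omega)]
          ring
        · -- k+1 ≤ j
          rw [termL hℓ (by omega) (by omega)]
          have hjq : (k:ℚ) + 1 ≤ (j:ℚ) := by exact_mod_cast (by omega : k + 1 ≤ j)
          rcases lt_trichotomy j (k+i) with ht | ht | ht
          · have h1 : (j:ℚ) + 1 ≤ (k:ℚ) + i := by exact_mod_cast (by omega : j + 1 ≤ k + i)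
            rw [min_eq_left (by linarith), min_eq_left (by linarith),
              min_eq_left (by linarith), if_neg (by omega), if_neg (by omega)]
            ring
          · have h1 : (j:ℚ) = (k:ℚ) + i := by exact_mod_cast ht
            rw [min_eq_left (by linarith), min_eq_left (by linarith),
              min_eq_right (by linarith), if_neg (by omega), if_pos ht]
            linarith
          · have h1 : (k:ℚ) + i + 1 ≤ (j:ℚ) := by exact_mod_cast (by omega : k + i + 1 ≤ j)
            rw [min_eq_right (by linarith), min_eq_right (by linarith),
              min_eq_right (by linarith), if_neg (by omega), if_neg (by omega)]
            ring

lemma formP (hℓ : 2 ≤ ℓ) (hi : 2 ≤ i) (hki : k + i ≤ ℓ) :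
    formC ℓ (xiP ℓ k i) (xiP ℓ k i) = i := by
  have h1 : (xiP ℓ k i).1 = 0 := rfl
  unfold formC
  rw [h1]
  simp only [Pi.zero_apply, zero_mul, mul_zero, Finset.sum_const_zero, zero_add, add_zero]
  have step : ∀ m ∈ Finset.range (ℓ+1),
      ∑ j ∈ Finset.range (ℓ+1), (xiP ℓ k i).2 m * dC ℓ m * cartanC ℓ m j * (xiP ℓ k i).2 j
        = ((xiP ℓ k i).2 m * dC ℓ m) *
            ((if m = k then -1 else 0) + (if m = k + i then 1 else 0)) := by
    intro m hm
    simp only [Finset.mem_range] at hm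
    rw [← xiP_row hℓ hi hki (by omega : m ≤ ℓ), Finset.mul_sum]
    exact Finset.sum_congr rfl fun j _ => by ring
  rw [Finset.sum_congr rfl step]
  simp only [mul_add, Finset.sum_add_distrib, mul_ite, mul_zero,
    Finset.sum_ite_eq', Finset.mem_range]
  rw [if_pos (by omega), if_pos (by omega), xiP_zero (le_refl k)]
  by_cases he : k + i = ℓ
  · rw [show k + i = ℓ from he, xiP_top (by omega)]
    have : dC ℓ ℓ = 2 := by unfold dC; rw [if_pos (Or.inr rfl)]
    rw [this]
    ring
  · rw [xiP_min (by omega) (by omega) (by omega)]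
    have hd : dC ℓ (k+i) = 1 := by unfold dC; rw [if_neg (by omega)]
    have hc : ((k+i:ℕ):ℚ) - (k:ℚ) = (i:ℚ) := by push_cast; ring
    rw [hd, hc, min_self]
    ring

lemma lam_form (hk : k ≤ ℓ) (w : Wt) (hw : w.1 = 0) :
    formC ℓ (Lam k) w = dC ℓ k * w.2 k := by
  unfold formC
  rw [hw]
  simp only [Lam, Pi.zero_apply, zero_mul, mul_zero, Finset.sum_const_zero, add_zero]
  rw [Finset.sum_eq_single k]
  · rw [if_pos rfl, one_mul]
  · intro b _ hb; rw [if_neg hb, zero_mul, zero_mul]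
  · intro hk'; exact absurd (Finset.mem_range.mpr (by omega)) hk'

lemma xiM_zero {m : ℕ} (h : k ≤ m) : (xiM ℓ k i).2 m = 0 := by
  unfold xiM; simp only
  rw [if_pos (Or.inl h)]

set_option maxHeartbeats 2000000 in
lemma cart_refl (hℓ : 2 ≤ ℓ) {a b : ℕ} (ha : a ≤ ℓ) (hb : b ≤ ℓ) :
    cartanC ℓ (ℓ-a) (ℓ-b) = cartanC ℓ a b := by
  unfold cartanC
  split_ifs <;> first | rfl | (exfalso; omega) | (exfalso; tauto)

lemma dC_refl {a : ℕ} (ha : a ≤ ℓ) : dC ℓ (ℓ-a) = dC ℓ a := by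
  unfold dC
  split_ifs <;> first | rfl | (exfalso; omega) | (exfalso; tauto)

lemma xiM_eq (hk : k ≤ ℓ) {j : ℕ} (hj : j ≤ ℓ) :
    (xiM ℓ k i).2 j = (xiP ℓ (ℓ-k) i).2 (ℓ-j) := by
  unfold xiM xiP; simp only
  by_cases h1 : k ≤ j ∨ ℓ < j
  · rw [if_pos h1, if_pos (show ℓ - j ≤ ℓ - k ∨ ℓ < ℓ - j from by omega)]
  · rw [if_neg h1, if_neg (show ¬(ℓ - j ≤ ℓ - k ∨ ℓ < ℓ - j) from by omega)]
    by_cases h2 : j = 0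
    · rw [if_pos h2, if_pos (show ℓ - j = ℓ from by omega)]
    · rw [if_neg h2, if_neg (show ¬(ℓ - j = ℓ) from by omega),
        Nat.cast_sub (by omega : j ≤ ℓ), Nat.cast_sub (by omega : k ≤ ℓ)]
      congr 1
      ring

lemma refl2 (n : ℕ) (F : ℕ → ℕ → ℚ) :
    ∑ a ∈ Finset.range (n+1), ∑ b ∈ Finset.range (n+1), F (n-a) (n-b)
      = ∑ a ∈ Finset.range (n+1), ∑ b ∈ Finset.range (n+1), F a b := by
  have h1 : ∀ (G : ℕ → ℚ), ∑ a ∈ Finset.range (n+1), G (n-a)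
      = ∑ a ∈ Finset.range (n+1), G a := by
    intro G; simpa using Finset.sum_range_reflect G (n+1)
  calc ∑ a ∈ Finset.range (n+1), ∑ b ∈ Finset.range (n+1), F (n-a) (n-b)
      = ∑ a ∈ Finset.range (n+1), ∑ b ∈ Finset.range (n+1), F (n-a) b :=
        Finset.sum_congr rfl (fun a _ => h1 (F (n-a)))
    _ = ∑ a ∈ Finset.range (n+1), ∑ b ∈ Finset.range (n+1), F a b :=
        h1 (fun a => ∑ b ∈ Finset.range (n+1), F a b)

lemma formM (hℓ : 2 ≤ ℓ) (hk : k ≤ ℓ) :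
    formC ℓ (xiM ℓ k i) (xiM ℓ k i) = formC ℓ (xiP ℓ (ℓ-k) i) (xiP ℓ (ℓ-k) i) := by
  have h1 : (xiM ℓ k i).1 = 0 := rfl
  have h2 : (xiP ℓ (ℓ-k) i).1 = 0 := rfl
  unfold formC
  rw [h1, h2]
  simp only [Pi.zero_apply, zero_mul, mul_zero, Finset.sum_const_zero, zero_add, add_zero]
  calc ∑ a ∈ Finset.range (ℓ+1), ∑ b ∈ Finset.range (ℓ+1),
        (xiM ℓ k i).2 a * dC ℓ a * cartanC ℓ a b * (xiM ℓ k i).2 b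
      = ∑ a ∈ Finset.range (ℓ+1), ∑ b ∈ Finset.range (ℓ+1),
        (xiP ℓ (ℓ-k) i).2 (ℓ-a) * dC ℓ (ℓ-a) * cartanC ℓ (ℓ-a) (ℓ-b)
          * (xiP ℓ (ℓ-k) i).2 (ℓ-b) := by
        refine Finset.sum_congr rfl fun a ha => Finset.sum_congr rfl fun b hb => ?_
        simp only [Finset.mem_range] at ha hb
        rw [xiM_eq hk (by omega : a ≤ ℓ), xiM_eq hk (by omega : b ≤ ℓ),
          cart_refl hℓ (by omega) (by omega), dC_refl (by omega)]
    _ = ∑ a ∈ Finset.range (ℓ+1), ∑ b ∈ Finset.range (ℓ+1),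
        (xiP ℓ (ℓ-k) i).2 a * dC ℓ a * cartanC ℓ a b * (xiP ℓ (ℓ-k) i).2 b :=
        refl2 ℓ (fun a b => (xiP ℓ (ℓ-k) i).2 a * dC ℓ a * cartanC ℓ a b
          * (xiP ℓ (ℓ-k) i).2 b)

end stmt6aux

/-- (ξ_k^{(±i)}, ξ_k^{(±i)}) = i and (Λ_k, ξ_k^{(±i)}) = 0 for even i > 0. -/
theorem stmt6 (ℓ k i : ℕ) (hℓ : 2 ≤ ℓ) (hk : k ≤ ℓ) (hi : 0 < i) (hev : Even i) :
    (k + i ≤ ℓ →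
      formC ℓ (xiP ℓ k i) (xiP ℓ k i) = i ∧ formC ℓ (Lam k) (xiP ℓ k i) = 0) ∧
    (i ≤ k →
      formC ℓ (xiM ℓ k i) (xiM ℓ k i) = i ∧ formC ℓ (Lam k) (xiM ℓ k i) = 0) := by
  have hi2 : 2 ≤ i := by rcases hev with ⟨r, hr⟩; omega
  constructor
  · intro hki
    refine ⟨formP hℓ hi2 hki, ?_⟩
    rw [lam_form hk _ rfl, xiP_zero (le_refl k), mul_zero]
  · intro hik
    refine ⟨?_, ?_⟩
    · rw [formM hℓ hk]
      exact formP (k := ℓ - k) hℓ hi2 (by omega)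
    · rw [lam_form hk _ rfl, xiM_zero (le_refl k), mul_zero]
end

section
/- Let $\ell \ge 2$, $k \in \{0,\dots,\ell\}$, $i \ge 0$ even with $k + i \le \ell - 1$, and $n \ge 0$. In the weight lattice of type $C^{(1)}_\ell$ one has $\Lambda_k + \xi_k^{(i)} - (n+1)\delta + \alpha_\ell = r_{\ell-1} r_{\ell-2} \cdots r_1 r_0 r_1 \cdots r_{k+i} \big( \Lambda_k + \xi_k^{(i)} - n\delta \big)$. -/
set_option linter.unnecessarySeqFocus false
set_option linter.unreachableTactic false
set_option linter.unusedTactic false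
set_option linter.unusedVariables false
set_option maxHeartbeats 1000000


open scoped BigOperators

lemma cJJ (ℓ j : ℕ) : cartanC ℓ j j = 2 := by unfold cartanC; rw [if_pos rfl]

lemma cL1 (ℓ j : ℕ) (h : j = 1) : cartanC ℓ j (j - 1) = -2 := by
  unfold cartanC; split_ifs <;> (try norm_num) <;> (try omega) <;> simp_all

lemma cL2 (ℓ j : ℕ) (h2 : 2 ≤ j) (h : j ≤ ℓ - 1) : cartanC ℓ j (j - 1) = -1 := by
  unfold cartanC; split_ifs <;> (try norm_num) <;> (try omega) <;> simp_all

lemma cR1 (ℓ j : ℕ) (h1 : 1 ≤ j) (h : j + 1 ≤ ℓ - 1) : cartanC ℓ j (j + 1) = -1 := by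
  unfold cartanC; split_ifs <;> (try norm_num) <;> (try omega) <;> simp_all

lemma cR2 (ℓ j : ℕ) (hℓ : 2 ≤ ℓ) (h : j + 1 = ℓ) : cartanC ℓ j (j + 1) = -2 := by
  unfold cartanC; split_ifs <;> (try norm_num) <;> (try omega) <;> simp_all

lemma c00 (ℓ : ℕ) : cartanC ℓ 0 0 = 2 := cJJ ℓ 0

lemma c01 (ℓ : ℕ) : cartanC ℓ 0 1 = -1 := by
  unfold cartanC; split_ifs <;> (try norm_num) <;> (try omega) <;> simp_all

lemma sum_row (ℓ j : ℕ) (c : ℕ → ℚ) (h1 : 1 ≤ j) (h2 : j + 1 ≤ ℓ) :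
    ∑ x ∈ Finset.range (ℓ + 1), c x * cartanC ℓ j x
      = c (j - 1) * cartanC ℓ j (j - 1) + c j * cartanC ℓ j j
        + c (j + 1) * cartanC ℓ j (j + 1) := by
  have hsub : ({j - 1, j, j + 1} : Finset ℕ) ⊆ Finset.range (ℓ + 1) := by
    intro x hx
    simp only [Finset.mem_insert, Finset.mem_singleton] at hx
    simp only [Finset.mem_range]; omega
  have hz : ∀ x ∈ Finset.range (ℓ + 1), x ∉ ({j - 1, j, j + 1} : Finset ℕ) →
      c x * cartanC ℓ j x = 0 := by
    intro x _ hnx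
    simp only [Finset.mem_insert, Finset.mem_singleton, not_or] at hnx
    have : cartanC ℓ j x = 0 := by
      unfold cartanC; split_ifs <;> (try norm_num) <;> (try omega) <;> simp_all
    rw [this, mul_zero]
  rw [← Finset.sum_subset hsub hz]
  rw [Finset.sum_insert (by simp only [Finset.mem_insert, Finset.mem_singleton]; omega),
      Finset.sum_insert (by simp only [Finset.mem_singleton]; omega),
      Finset.sum_singleton]
  ring

lemma sum_row0 (ℓ : ℕ) (c : ℕ → ℚ) (hℓ : 2 ≤ ℓ) :
    ∑ x ∈ Finset.range (ℓ + 1), c x * cartanC ℓ 0 x = c 0 * 2 - c 1 := by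
  have hsub : ({0, 1} : Finset ℕ) ⊆ Finset.range (ℓ + 1) := by
    intro x hx
    simp only [Finset.mem_insert, Finset.mem_singleton] at hx
    simp only [Finset.mem_range]; omega
  have hz : ∀ x ∈ Finset.range (ℓ + 1), x ∉ ({0, 1} : Finset ℕ) →
      c x * cartanC ℓ 0 x = 0 := by
    intro x _ hnx
    simp only [Finset.mem_insert, Finset.mem_singleton, not_or] at hnx
    have : cartanC ℓ 0 x = 0 := by
      unfold cartanC; split_ifs <;> (try norm_num) <;> (try omega) <;> simp_all
    rw [this, mul_zero]
  rw [← Finset.sum_subset hsub hz]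
  rw [Finset.sum_insert (by simp only [Finset.mem_singleton]; omega), Finset.sum_singleton,
      c00, c01]
  ring

-- xi values
lemma xival_le (ℓ k i j : ℕ) (h : j ≤ k) : (xiP ℓ k i).2 j = 0 := by
  simp only [xiP]; rw [if_pos (Or.inl h)]

lemma xival_top (ℓ k i : ℕ) (hk : k < ℓ) : (xiP ℓ k i).2 ℓ = (i : ℚ) / 2 := by
  simp only [xiP]
  rw [if_neg (by omega)]
  simp

lemma xival_lo (ℓ k i j : ℕ) (h1 : k < j) (h2 : j ≤ k + i) (h3 : j < ℓ) :
    (xiP ℓ k i).2 j = (j : ℚ) - k := by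
  simp only [xiP]
  rw [if_neg (by omega), if_neg (by omega), min_eq_left]
  have : (j : ℚ) ≤ (k : ℚ) + (i : ℚ) := by exact_mod_cast h2
  linarith

lemma xival_hi (ℓ k i j : ℕ) (h1 : k + i ≤ j) (h2 : j < ℓ) :
    (xiP ℓ k i).2 j = (i : ℚ) := by
  by_cases h : j ≤ k
  · have hi : i = 0 := by omega
    rw [xival_le ℓ k i j h, hi]; norm_num
  · simp only [xiP]
    rw [if_neg (by omega), if_neg (by omega), min_eq_right]
    have : (k : ℚ) + (i : ℚ) ≤ (j : ℚ) := by exact_mod_cast h1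
    linarith

-- delta values
lemma delval_0 (ℓ : ℕ) : (deltaC ℓ).2 0 = 1 := by
  simp [deltaC]

lemma delval_top (ℓ : ℕ) : (deltaC ℓ).2 ℓ = 1 := by
  simp [deltaC]

lemma delval_mid (ℓ j : ℕ) (h1 : 0 < j) (h2 : j < ℓ) : (deltaC ℓ).2 j = 2 := by
  simp only [deltaC]; rw [if_neg (by omega), if_pos h2]

lemma delval_gt (ℓ j : ℕ) (h : ℓ < j) : (deltaC ℓ).2 j = 0 := by
  simp only [deltaC]; rw [if_neg (by omega), if_neg (by omega)]

-- states
def stA (ℓ k i m : ℕ) : Wt :=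
  ((Lam k).1, fun j => (xiP ℓ k i).2 j - (if m < j ∧ j ≤ k + i then 1 else 0))

def stB (ℓ k i m : ℕ) : Wt :=
  ((Lam k).1, fun j => if j < m then (xiP ℓ k i).2 j - (deltaC ℓ).2 j
      else (xiP ℓ k i).2 j - (if 0 < j ∧ j ≤ k + i then 1 else 0))

-- helper for reflection steps
lemma refl_eq (ℓ j : ℕ) (A B : Wt) (q : ℚ) (hp : pairC ℓ j A = q)
    (h1 : A.1 = B.1) (h2 : ∀ x, A.2 x - (if x = j then q else 0) = B.2 x) :
    reflC ℓ j A = B := by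
  unfold reflC
  rw [hp]
  refine Prod.ext ?_ ?_
  · show A.1 - q • (al j).1 = B.1
    simp [al, h1]
  · funext x
    show A.2 x - q • (al j).2 x = B.2 x
    rw [← h2 x]
    simp only [al]; simp only [smul_eq_mul, mul_ite, mul_one, mul_zero]

-- linearity of pairC and delta invariance
lemma pairC_add (ℓ j : ℕ) (v w : Wt) : pairC ℓ j (v + w) = pairC ℓ j v + pairC ℓ j w := by
  simp only [pairC, Prod.fst_add, Prod.snd_add, Pi.add_apply, add_mul, Finset.sum_add_distrib]
  ring

lemma pairC_smul (ℓ j : ℕ) (q : ℚ) (v : Wt) : pairC ℓ j (q • v) = q * pairC ℓ j v := by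
  simp only [pairC, Prod.smul_fst, Prod.smul_snd, Pi.smul_apply, smul_eq_mul, mul_add,
    Finset.mul_sum]
  congr 1
  apply Finset.sum_congr rfl
  intro x _
  ring
-- pair_delta and linear lemmas
lemma pair_delta (ℓ j : ℕ) (hℓ : 2 ≤ ℓ) (hj : j ≤ ℓ - 1) : pairC ℓ j (deltaC ℓ) = 0 := by
  unfold pairC
  have hf : (deltaC ℓ).1 j = 0 := rfl
  rcases Nat.eq_zero_or_pos j with hj0 | hj1
  · subst hj0
    rw [sum_row0 ℓ _ hℓ, hf, delval_0, delval_mid ℓ 1 (by omega) (by omega)]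
    norm_num
  · rw [sum_row ℓ j _ hj1 (by omega), cJJ, hf, delval_mid ℓ j (by omega) (by omega)]
    rcases Nat.eq_or_lt_of_le hj1 with hj2 | hj2
    · -- j = 1
      rw [cL1 ℓ j (by omega), show j - 1 = 0 from by omega, delval_0]
      rcases Nat.lt_or_ge (j + 1) ℓ with hl | hl
      · rw [cR1 ℓ j (by omega) (by omega), delval_mid ℓ (j+1) (by omega) (by omega)]; norm_num
      · rw [cR2 ℓ j hℓ (by omega), show j + 1 = ℓ from by omega, delval_top]; norm_num
    · -- j ≥ 2
      rw [cL2 ℓ j (by omega) (by omega), delval_mid ℓ (j-1) (by omega) (by omega)]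
      rcases Nat.lt_or_ge (j + 1) ℓ with hl | hl
      · rw [cR1 ℓ j (by omega) (by omega), delval_mid ℓ (j+1) (by omega) (by omega)]; norm_num
      · rw [cR2 ℓ j hℓ (by omega), show j + 1 = ℓ from by omega, delval_top]; norm_num

lemma wordAct_cons (ℓ a : ℕ) (l : List ℕ) (v : Wt) :
    wordAct ℓ (a :: l) v = reflC ℓ a (wordAct ℓ l v) := rfl

lemma wordAct_append (ℓ : ℕ) (l₁ l₂ : List ℕ) (v : Wt) :
    wordAct ℓ (l₁ ++ l₂) v = wordAct ℓ l₁ (wordAct ℓ l₂ v) := by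
  simp [wordAct, List.foldr_append]

lemma word_delta (ℓ : ℕ) (hℓ : 2 ≤ ℓ) (w : List ℕ) (hw : ∀ x ∈ w, x ≤ ℓ - 1) (v : Wt) (q : ℚ) :
    wordAct ℓ w (v + q • deltaC ℓ) = wordAct ℓ w v + q • deltaC ℓ := by
  induction w with
  | nil => rfl
  | cons a l ih =>
    rw [wordAct_cons, wordAct_cons, ih (fun x hx => hw x (List.mem_cons_of_mem a hx))]
    unfold reflC
    rw [pairC_add, pairC_smul, pair_delta ℓ a hℓ (hw a List.mem_cons_self), mul_zero,
      add_zero, add_sub_right_comm]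
lemma pairA (ℓ k i j : ℕ) (hℓ : 2 ≤ ℓ) (hki : k + i ≤ ℓ - 1) (h1 : 1 ≤ j) (h2 : j ≤ k + i) :
    pairC ℓ j (stA ℓ k i j) = 1 := by
  unfold pairC
  have hfst : (stA ℓ k i j).1 j = if j = k then 1 else 0 := rfl
  have hA : ∀ x, (stA ℓ k i j).2 x
      = (xiP ℓ k i).2 x - (if j < x ∧ x ≤ k + i then 1 else 0) := fun x => rfl
  rw [sum_row ℓ j _ h1 (by omega), cJJ, hfst, hA (j-1), hA j, hA (j+1),
    if_neg (show ¬(j < j - 1 ∧ j - 1 ≤ k + i) by omega),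
    if_neg (show ¬(j < j ∧ j ≤ k + i) by omega)]
  rcases lt_trichotomy j k with hjk | hjk | hjk
  · -- j < k
    rw [xival_le ℓ k i (j-1) (by omega), xival_le ℓ k i j (by omega),
        xival_le ℓ k i (j+1) (by omega), if_neg (show ¬ j = k by omega),
        if_pos (show j < j + 1 ∧ j + 1 ≤ k + i by omega),
        cR1 ℓ j h1 (by omega)]
    ring
  · -- j = k
    have hc : (j : ℚ) = (k : ℚ) := by exact_mod_cast hjk
    rw [if_pos hjk, xival_le ℓ k i (j-1) (by omega), xival_le ℓ k i j (by omega)]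
    rcases Nat.eq_zero_or_pos i with hi | hi
    · rw [if_neg (show ¬(j < j + 1 ∧ j + 1 ≤ k + i) by omega)]
      rcases Nat.lt_or_ge (j+1) ℓ with hjl | hjl
      · rw [xival_hi ℓ k i (j+1) (by omega) hjl, hi]
        norm_num
      · rw [show j + 1 = ℓ from by omega, xival_top ℓ k i (by omega), hi]
        norm_num
    · rw [if_pos (show j < j + 1 ∧ j + 1 ≤ k + i by omega),
          xival_lo ℓ k i (j+1) (by omega) (by omega) (by omega),
          cR1 ℓ j h1 (by omega)]
      push_cast
      linear_combination -hc
  · -- k < j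
    rw [if_neg (show ¬ j = k by omega), xival_lo ℓ k i j (by omega) h2 (by omega)]
    rcases Nat.lt_or_ge k (j-1) with hk1 | hk1
    · -- j ≥ k + 2
      rw [xival_lo ℓ k i (j-1) (by omega) (by omega) (by omega),
          cL2 ℓ j (by omega) (by omega),
          Nat.cast_sub (show 1 ≤ j by omega), Nat.cast_one]
      rcases Nat.lt_or_ge j (k+i) with hjt | hjt
      · rw [if_pos (show j < j + 1 ∧ j + 1 ≤ k + i by omega),
            xival_lo ℓ k i (j+1) (by omega) (by omega) (by omega),
            cR1 ℓ j h1 (by omega)]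
        push_cast; ring
      · have hc : (j : ℚ) = (k : ℚ) + (i : ℚ) := by exact_mod_cast (show j = k + i by omega)
        rw [if_neg (show ¬(j < j + 1 ∧ j + 1 ≤ k + i) by omega)]
        rcases Nat.lt_or_ge (j+1) ℓ with hjl | hjl
        · rw [xival_hi ℓ k i (j+1) (by omega) hjl, cR1 ℓ j h1 (by omega)]
          push_cast; linear_combination hc
        · rw [cR2 ℓ j hℓ (by omega), show j + 1 = ℓ from by omega,
              xival_top ℓ k i (by omega)]
          push_cast; linear_combination hc
    · -- j = k + 1
      have hc1 : (j : ℚ) = (k : ℚ) + 1 := by exact_mod_cast (show j = k + 1 by omega)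
      rw [xival_le ℓ k i (j-1) (by omega)]
      rcases Nat.lt_or_ge j (k+i) with hjt | hjt
      · rw [if_pos (show j < j + 1 ∧ j + 1 ≤ k + i by omega),
            xival_lo ℓ k i (j+1) (by omega) (by omega) (by omega),
            cR1 ℓ j h1 (by omega)]
        push_cast; linear_combination hc1
      · have hc : (j : ℚ) = (k : ℚ) + (i : ℚ) := by exact_mod_cast (show j = k + i by omega)
        rw [if_neg (show ¬(j < j + 1 ∧ j + 1 ≤ k + i) by omega)]
        rcases Nat.lt_or_ge (j+1) ℓ with hjl | hjl
        · rw [xival_hi ℓ k i (j+1) (by omega) hjl, cR1 ℓ j h1 (by omega)]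
          push_cast; linear_combination hc + hc1
        · rw [cR2 ℓ j hℓ (by omega), show j + 1 = ℓ from by omega,
              xival_top ℓ k i (by omega)]
          push_cast; linear_combination hc + hc1
lemma pairB (ℓ k i m : ℕ) (hℓ : 2 ≤ ℓ) (hki : k + i ≤ ℓ - 1) (hm : m ≤ ℓ - 1) :
    pairC ℓ m (stB ℓ k i m)
      = (deltaC ℓ).2 m - (if 0 < m ∧ m ≤ k + i then 1 else 0) := by
  unfold pairC
  have hfst : (stB ℓ k i m).1 m = if m = k then 1 else 0 := rfl
  have hB : ∀ x, (stB ℓ k i m).2 x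
      = if x < m then (xiP ℓ k i).2 x - (deltaC ℓ).2 x
        else (xiP ℓ k i).2 x - (if 0 < x ∧ x ≤ k + i then 1 else 0) := fun x => rfl
  rcases Nat.eq_zero_or_pos m with hm0 | hm1
  · subst hm0
    rw [sum_row0 ℓ _ hℓ, hfst, hB 0, hB 1,
        if_neg (show ¬(0:ℕ) < 0 by omega), if_neg (show ¬(1:ℕ) < 0 by omega),
        if_neg (show ¬((0:ℕ) < 0 ∧ (0:ℕ) ≤ k + i) by omega),
        xival_le ℓ k i 0 (Nat.zero_le k), delval_0]
    rcases Nat.eq_zero_or_pos k with hk | hk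
    · rcases Nat.eq_zero_or_pos i with hi | hi
      · rw [if_neg (show ¬((0:ℕ) < 1 ∧ 1 ≤ k + i) by omega),
            xival_hi ℓ k i 1 (by omega) (by omega), if_pos (show (0:ℕ) = k by omega), hi]
        norm_num
      · rw [if_pos (show (0:ℕ) < 1 ∧ 1 ≤ k + i by omega),
            xival_lo ℓ k i 1 (by omega) (by omega) (by omega),
            if_pos (show (0:ℕ) = k by omega), hk]
        norm_num
    · rw [if_pos (show (0:ℕ) < 1 ∧ 1 ≤ k + i by omega), xival_le ℓ k i 1 hk,
          if_neg (show ¬(0:ℕ) = k by omega)]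
      norm_num
  · -- m ≥ 1
    rw [sum_row ℓ m _ hm1 (by omega), cJJ, hfst, hB (m-1), hB m, hB (m+1),
        if_pos (show m - 1 < m by omega), if_neg (show ¬ m < m by omega),
        if_neg (show ¬ m + 1 < m by omega),
        delval_mid ℓ m (by omega) (by omega)]
    -- now goal has: [m=k] + (ξ(m-1) - δ(m-1))*C + (ξ m - E)*2 + (ξ(m+1) - corr)*C' = 2 - E'
    rcases lt_trichotomy m k with hmk | hmk | hmk
    · -- m < k
      rw [xival_le ℓ k i (m-1) (by omega), xival_le ℓ k i m (by omega),
          xival_le ℓ k i (m+1) (by omega),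
          if_pos (show 0 < m ∧ m ≤ k + i by omega),
          if_pos (show 0 < m + 1 ∧ m + 1 ≤ k + i by omega),
          if_neg (show ¬ m = k by omega),
          cR1 ℓ m (by omega) (by omega)]
      rcases Nat.eq_or_lt_of_le hm1 with hm2 | hm2
      · rw [cL1 ℓ m (by omega), show m - 1 = 0 from by omega, delval_0]; norm_num
      · rw [cL2 ℓ m (by omega) (by omega), delval_mid ℓ (m-1) (by omega) (by omega)]; norm_num
    · -- m = k
      have hc : (m : ℚ) = (k : ℚ) := by exact_mod_cast hmk
      rw [xival_le ℓ k i (m-1) (by omega), xival_le ℓ k i m (by omega),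
          if_pos (show 0 < m ∧ m ≤ k + i by omega), if_pos hmk]
      rcases Nat.eq_zero_or_pos i with hi | hi
      · rw [if_neg (show ¬(0 < m + 1 ∧ m + 1 ≤ k + i) by omega)]
        rcases Nat.lt_or_ge (m+1) ℓ with hml | hml
        · rw [xival_hi ℓ k i (m+1) (by omega) hml, hi]
          rcases Nat.eq_or_lt_of_le hm1 with hm2 | hm2
          · rw [cL1 ℓ m (by omega), show m - 1 = 0 from by omega, delval_0]; norm_num
          · rw [cL2 ℓ m (by omega) (by omega), delval_mid ℓ (m-1) (by omega) (by omega)]; norm_num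
        · rw [cR2 ℓ m hℓ (by omega), show m + 1 = ℓ from by omega,
              xival_top ℓ k i (by omega), hi]
          rcases Nat.eq_or_lt_of_le hm1 with hm2 | hm2
          · rw [cL1 ℓ m (by omega), show m - 1 = 0 from by omega, delval_0]; norm_num
          · rw [cL2 ℓ m (by omega) (by omega), delval_mid ℓ (m-1) (by omega) (by omega)]; norm_num
      · rw [if_pos (show 0 < m + 1 ∧ m + 1 ≤ k + i by omega),
            xival_lo ℓ k i (m+1) (by omega) (by omega) (by omega),
            cR1 ℓ m (by omega) (by omega)]
        rcases Nat.eq_or_lt_of_le hm1 with hm2 | hm2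
        · rw [cL1 ℓ m (by omega), show m - 1 = 0 from by omega, delval_0]
          push_cast; linear_combination -hc
        · rw [cL2 ℓ m (by omega) (by omega), delval_mid ℓ (m-1) (by omega) (by omega)]
          push_cast; linear_combination -hc
    · -- k < m
      rw [if_neg (show ¬ m = k by omega)]
      rcases Nat.lt_or_ge m (k+i) with hmt | hmt
      · -- k < m < k+i
        rw [xival_lo ℓ k i m (by omega) (by omega) (by omega),
            if_pos (show 0 < m ∧ m ≤ k + i by omega),
            if_pos (show 0 < m + 1 ∧ m + 1 ≤ k + i by omega),
            xival_lo ℓ k i (m+1) (by omega) (by omega) (by omega),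
            cR1 ℓ m (by omega) (by omega)]
        rcases Nat.lt_or_ge k (m-1) with hk1 | hk1
        · rw [xival_lo ℓ k i (m-1) (by omega) (by omega) (by omega),
              cL2 ℓ m (by omega) (by omega), delval_mid ℓ (m-1) (by omega) (by omega),
              Nat.cast_sub (show 1 ≤ m by omega), Nat.cast_one]
          push_cast; ring
        · have hc1 : (m : ℚ) = (k : ℚ) + 1 := by exact_mod_cast (show m = k + 1 by omega)
          rw [xival_le ℓ k i (m-1) (by omega)]
          rcases Nat.eq_or_lt_of_le hm1 with hm2 | hm2
          · rw [cL1 ℓ m (by omega), show m - 1 = 0 from by omega, delval_0]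
            push_cast; linear_combination hc1
          · rw [cL2 ℓ m (by omega) (by omega), delval_mid ℓ (m-1) (by omega) (by omega)]
            push_cast; linear_combination hc1
      · rcases Nat.eq_or_lt_of_le hmt with hme | hme
        · -- m = k + i (with k < m, so i ≥ 1)
          have hc : (m : ℚ) = (k : ℚ) + (i : ℚ) := by exact_mod_cast hme.symm
          rw [xival_lo ℓ k i m (by omega) (by omega) (by omega),
              if_pos (show 0 < m ∧ m ≤ k + i by omega),
              if_neg (show ¬(0 < m + 1 ∧ m + 1 ≤ k + i) by omega)]
          have hCp : (xiP ℓ k i).2 (m+1) * cartanC ℓ m (m+1) = (i : ℚ) * (-1) := by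
            rcases Nat.lt_or_ge (m+1) ℓ with hml | hml
            · rw [xival_hi ℓ k i (m+1) (by omega) hml, cR1 ℓ m (by omega) (by omega)]
            · rw [cR2 ℓ m hℓ (by omega), show m + 1 = ℓ from by omega,
                  xival_top ℓ k i (by omega)]
              ring
          rw [sub_zero, hCp]
          rcases Nat.lt_or_ge k (m-1) with hk1 | hk1
          · rw [xival_lo ℓ k i (m-1) (by omega) (by omega) (by omega),
                cL2 ℓ m (by omega) (by omega), delval_mid ℓ (m-1) (by omega) (by omega),
                Nat.cast_sub (show 1 ≤ m by omega), Nat.cast_one]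
            push_cast; linear_combination hc
          · have hc1 : (m : ℚ) = (k : ℚ) + 1 := by exact_mod_cast (show m = k + 1 by omega)
            rw [xival_le ℓ k i (m-1) (by omega)]
            rcases Nat.eq_or_lt_of_le hm1 with hm2 | hm2
            · rw [cL1 ℓ m (by omega), show m - 1 = 0 from by omega, delval_0]
              push_cast; linear_combination hc + hc1
            · rw [cL2 ℓ m (by omega) (by omega), delval_mid ℓ (m-1) (by omega) (by omega)]
              push_cast; linear_combination hc + hc1
        · -- m > k + i
          rw [xival_hi ℓ k i m (by omega) (by omega),
              xival_hi ℓ k i (m-1) (by omega) (by omega),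
              if_neg (show ¬(0 < m ∧ m ≤ k + i) by omega),
              if_neg (show ¬(0 < m + 1 ∧ m + 1 ≤ k + i) by omega)]
          have hCp : (xiP ℓ k i).2 (m+1) * cartanC ℓ m (m+1) = (i : ℚ) * (-1) := by
            rcases Nat.lt_or_ge (m+1) ℓ with hml | hml
            · rw [xival_hi ℓ k i (m+1) (by omega) hml, cR1 ℓ m (by omega) (by omega)]
            · rw [cR2 ℓ m hℓ (by omega), show m + 1 = ℓ from by omega,
                  xival_top ℓ k i (by omega)]
              ring
          rw [sub_zero, sub_zero, hCp]
          rcases Nat.eq_or_lt_of_le hm1 with hm2 | hm2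
          · have hi0 : i = 0 := by omega
            rw [cL1 ℓ m (by omega), show m - 1 = 0 from by omega, delval_0, hi0]
            norm_num
          · rw [cL2 ℓ m (by omega) (by omega), delval_mid ℓ (m-1) (by omega) (by omega)]
            push_cast; ring
lemma stepA (ℓ k i j : ℕ) (hℓ : 2 ≤ ℓ) (hki : k + i ≤ ℓ - 1) (h1 : 1 ≤ j) (h2 : j ≤ k + i) :
    reflC ℓ j (stA ℓ k i j) = stA ℓ k i (j - 1) := by
  apply refl_eq ℓ j (stA ℓ k i j) (stA ℓ k i (j - 1)) 1 (pairA ℓ k i j hℓ hki h1 h2) rfl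
  intro x
  show (xiP ℓ k i).2 x - (if j < x ∧ x ≤ k + i then 1 else 0) - (if x = j then (1:ℚ) else 0)
      = (xiP ℓ k i).2 x - (if j - 1 < x ∧ x ≤ k + i then 1 else 0)
  split_ifs <;> first | (exfalso; omega) | ring

lemma stepB (ℓ k i m : ℕ) (hℓ : 2 ≤ ℓ) (hki : k + i ≤ ℓ - 1) (hm : m ≤ ℓ - 1) :
    reflC ℓ m (stB ℓ k i m) = stB ℓ k i (m + 1) := by
  apply refl_eq ℓ m (stB ℓ k i m) (stB ℓ k i (m + 1)) _ (pairB ℓ k i m hℓ hki hm) rfl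
  intro x
  show (if x < m then (xiP ℓ k i).2 x - (deltaC ℓ).2 x
        else (xiP ℓ k i).2 x - (if 0 < x ∧ x ≤ k + i then 1 else 0))
      - (if x = m then (deltaC ℓ).2 m - (if 0 < m ∧ m ≤ k + i then 1 else 0) else 0)
      = (if x < m + 1 then (xiP ℓ k i).2 x - (deltaC ℓ).2 x
        else (xiP ℓ k i).2 x - (if 0 < x ∧ x ≤ k + i then 1 else 0))
  by_cases hx : x = m
  · subst hx
    rw [if_neg (show ¬ x < x by omega), if_pos rfl, if_pos (show x < x + 1 by omega)]
    ring
  · rw [if_neg hx]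
    by_cases hx2 : x < m
    · rw [if_pos hx2, if_pos (show x < m + 1 by omega)]; ring
    · rw [if_neg hx2, if_neg (show ¬ x < m + 1 by omega)]; ring

lemma stAB0 (ℓ k i : ℕ) : stA ℓ k i 0 = stB ℓ k i 0 := by
  refine Prod.ext rfl ?_
  funext x
  show (xiP ℓ k i).2 x - (if 0 < x ∧ x ≤ k + i then 1 else 0)
      = if x < 0 then (xiP ℓ k i).2 x - (deltaC ℓ).2 x
        else (xiP ℓ k i).2 x - (if 0 < x ∧ x ≤ k + i then 1 else 0)
  rw [if_neg (Nat.not_lt_zero x)]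

lemma phase1 (ℓ k i : ℕ) (hℓ : 2 ≤ ℓ) (hki : k + i ≤ ℓ - 1) :
    ∀ d, d ≤ k + i →
      wordAct ℓ (List.range' (k + i - d + 1) d) (stA ℓ k i (k + i)) = stA ℓ k i (k + i - d) := by
  intro d
  induction d with
  | zero => intro _; simp [wordAct]
  | succ d ih =>
    intro hd
    rw [List.range'_succ, wordAct_cons,
        show k + i - (d + 1) + 1 + 1 = k + i - d + 1 from by omega,
        ih (by omega),
        show k + i - (d + 1) + 1 = k + i - d from by omega,
        stepA ℓ k i (k + i - d) hℓ hki (by omega) (by omega),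
        show k + i - d - 1 = k + i - (d + 1) from by omega]

lemma phase2 (ℓ k i : ℕ) (hℓ : 2 ≤ ℓ) (hki : k + i ≤ ℓ - 1) :
    ∀ m, m ≤ ℓ → wordAct ℓ (List.range m).reverse (stA ℓ k i 0) = stB ℓ k i m := by
  intro m
  induction m with
  | zero => intro _; exact stAB0 ℓ k i
  | succ m ih =>
    intro hm
    rw [List.range_succ, List.reverse_append, List.reverse_singleton, List.singleton_append,
        wordAct_cons, ih (by omega), stepB ℓ k i m hℓ hki (by omega)]

/-- Λ_k + ξ_k^{(i)} − (n+1)δ + α_ℓ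
= r_{ℓ-1}⋯r_1 r_0 r_1⋯r_{k+i} (Λ_k + ξ_k^{(i)} − nδ). -/
theorem stmt9 (ℓ k i n : ℕ) (hℓ : 2 ≤ ℓ) (hev : Even i) (hki : k + i ≤ ℓ - 1) :
    Lam k + xiP ℓ k i - (n + 1) • deltaC ℓ + al ℓ
      = wordAct ℓ ((List.range ℓ).reverse ++ List.range' 1 (k + i))
          (Lam k + xiP ℓ k i - n • deltaC ℓ) := by
  have hword : ∀ x ∈ (List.range ℓ).reverse ++ List.range' 1 (k + i), x ≤ ℓ - 1 := by
    intro x hx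
    simp only [List.mem_append, List.mem_reverse, List.mem_range, List.mem_range'_1] at hx
    omega
  have hstart : Lam k + xiP ℓ k i - n • deltaC ℓ
      = stA ℓ k i (k + i) + (-(n : ℚ)) • deltaC ℓ := by
    rw [← Nat.cast_smul_eq_nsmul ℚ n (deltaC ℓ)]
    refine Prod.ext ?_ ?_
    · funext x
      show (Lam k).1 x + (xiP ℓ k i).1 x - (n : ℚ) • (deltaC ℓ).1 x
          = (Lam k).1 x + (-(n : ℚ)) • (deltaC ℓ).1 x
      show (Lam k).1 x + (0 : ℚ) - (n : ℚ) • (0 : ℚ) = (Lam k).1 x + (-(n : ℚ)) • (0 : ℚ)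
      simp
    · funext x
      show (Lam k).2 x + (xiP ℓ k i).2 x - (n : ℚ) • (deltaC ℓ).2 x
          = ((xiP ℓ k i).2 x - (if k + i < x ∧ x ≤ k + i then 1 else 0))
            + (-(n : ℚ)) • (deltaC ℓ).2 x
      have hL : (Lam k).2 x = 0 := rfl
      rw [hL, if_neg (show ¬(k + i < x ∧ x ≤ k + i) by omega), smul_eq_mul, smul_eq_mul]
      ring
  have hfinal : Lam k + xiP ℓ k i - (n + 1) • deltaC ℓ + al ℓ
      = stB ℓ k i ℓ + (-(n : ℚ)) • deltaC ℓ := by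
    rw [← Nat.cast_smul_eq_nsmul ℚ (n + 1) (deltaC ℓ)]
    refine Prod.ext ?_ ?_
    · funext x
      show (Lam k).1 x + (0 : ℚ) - ((n + 1 : ℕ) : ℚ) • (0 : ℚ) + (0 : ℚ)
          = (Lam k).1 x + (-(n : ℚ)) • (0 : ℚ)
      simp
    · funext x
      show (Lam k).2 x + (xiP ℓ k i).2 x - ((n + 1 : ℕ) : ℚ) • (deltaC ℓ).2 x
            + (if x = ℓ then (1:ℚ) else 0)
          = (if x < ℓ then (xiP ℓ k i).2 x - (deltaC ℓ).2 x
             else (xiP ℓ k i).2 x - (if 0 < x ∧ x ≤ k + i then 1 else 0))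
            + (-(n : ℚ)) • (deltaC ℓ).2 x
      have hL : (Lam k).2 x = 0 := rfl
      rw [hL, smul_eq_mul, smul_eq_mul]
      push_cast
      rcases lt_trichotomy x ℓ with hx | hx | hx
      · rw [if_neg (show ¬ x = ℓ by omega), if_pos hx]
        ring
      · subst hx
        rw [if_pos rfl, if_neg (show ¬ x < x by omega),
            if_neg (show ¬(0 < x ∧ x ≤ k + i) by omega), delval_top]
        ring
      · rw [if_neg (show ¬ x = ℓ by omega), if_neg (show ¬ x < ℓ by omega),
            if_neg (show ¬(0 < x ∧ x ≤ k + i) by omega), delval_gt ℓ x hx]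
        ring
  rw [hstart, word_delta ℓ hℓ _ hword _ _, wordAct_append]
  have h1 := phase1 ℓ k i hℓ hki (k + i) (le_refl _)
  rw [show k + i - (k + i) + 1 = 1 from by omega, show k + i - (k + i) = 0 from by omega] at h1
  rw [h1, phase2 ℓ k i hℓ hki ℓ (le_refl ℓ)]
  exact hfinal
end

section
/- Let $\ell \ge 2$ and $1 \le k \le \ell-1$, and let $n \ge 0$. Then $\Lambda_k + \xi_k^{(-k)} - (n+1)\delta + \alpha_\ell = r_{\ell-1} r_{\ell-2} \cdots r_1 r_0 \big( \Lambda_k + \xi_k^{(-k)} - n\delta \big)$ in the weight lattice of type $C^{(1)}_\ell$, where $k$ is assumed even so that $\xi_k^{(-k)}$ is defined. -/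
open scoped BigOperators

lemma cartan_vanish (ℓ m i : ℕ) (hm : m < ℓ)
    (h1 : i ≠ m) (h2 : i + 1 ≠ m) (h3 : m + 1 ≠ i) : cartanC ℓ m i = 0 := by
  unfold cartanC
  split_ifs <;> first | rfl | omega | tauto | norm_num

lemma cartan_diag (ℓ m : ℕ) : cartanC ℓ m m = 2 := by simp [cartanC]

lemma cartan_sub (ℓ m : ℕ) (hm1 : 1 ≤ m) (hm : m < ℓ) :
    cartanC ℓ m (m - 1) = if m = 1 then -2 else -1 := by
  unfold cartanC
  split_ifs <;> first | rfl | omega | tauto | norm_num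

lemma cartan_add (ℓ m : ℕ) (hm1 : 1 ≤ m) (hm : m < ℓ) :
    cartanC ℓ m (m + 1) = if m + 1 = ℓ then -2 else -1 := by
  unfold cartanC
  split_ifs <;> first | rfl | omega | tauto | norm_num

lemma cartan01 (ℓ : ℕ) (hℓ : 2 ≤ ℓ) : cartanC ℓ 0 1 = -1 := by
  unfold cartanC
  split_ifs <;> first | rfl | omega | tauto | norm_num

lemma sum_cartan0 (ℓ : ℕ) (hℓ : 2 ≤ ℓ) (f : ℕ → ℚ) :
    ∑ i ∈ Finset.range (ℓ + 1), f i * cartanC ℓ 0 i = f 0 * 2 + f 1 * (-1) := by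
  have hsub : ({0, 1} : Finset ℕ) ⊆ Finset.range (ℓ + 1) := by
    intro x hx; simp only [Finset.mem_insert, Finset.mem_singleton] at hx
    rcases hx with rfl | rfl <;> simp <;> omega
  rw [← Finset.sum_subset hsub]
  · rw [Finset.sum_pair (by omega)]
    rw [cartan_diag, cartan01 ℓ hℓ]
  · intro i _ hin
    simp only [Finset.mem_insert, Finset.mem_singleton] at hin
    push_neg at hin
    rw [cartan_vanish ℓ 0 i (by omega) (by omega) (by omega) (by omega), mul_zero]

lemma sum_cartan (ℓ m : ℕ) (hℓ : 2 ≤ ℓ) (hm1 : 1 ≤ m) (hm : m < ℓ) (f : ℕ → ℚ) :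
    ∑ i ∈ Finset.range (ℓ + 1), f i * cartanC ℓ m i
      = f (m - 1) * (if m = 1 then -2 else -1) + f m * 2
        + f (m + 1) * (if m + 1 = ℓ then -2 else -1) := by
  have hsub : ({m - 1, m, m + 1} : Finset ℕ) ⊆ Finset.range (ℓ + 1) := by
    intro x hx
    simp only [Finset.mem_insert, Finset.mem_singleton] at hx
    rcases hx with rfl | rfl | rfl <;> simp <;> omega
  rw [← Finset.sum_subset hsub]
  · rw [Finset.sum_insert (by simp only [Finset.mem_insert, Finset.mem_singleton]; omega), Finset.sum_insert (by simp only [Finset.mem_singleton]; omega),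
      Finset.sum_singleton, cartan_diag, cartan_sub ℓ m hm1 hm, cartan_add ℓ m hm1 hm]
    ring
  · intro i _ hin
    simp only [Finset.mem_insert, Finset.mem_singleton] at hin
    push_neg at hin
    rw [cartan_vanish ℓ m i (by omega) (by omega) (by omega) (by omega), mul_zero]

def subW (m : ℕ) : Wt := (0, fun i => if i < m then (if i = 0 then (1:ℚ) else 2) else 0)

lemma subW_zero : subW 0 = 0 := by
  unfold subW
  refine Prod.ext rfl ?_
  funext i
  simp

lemma subW_succ (m : ℕ) :
    subW (m + 1) = subW m + (if m = 0 then (1:ℚ) else 2) • al m := by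
  unfold subW al
  rcases eq_or_ne m 0 with rfl | hm
  · refine Prod.ext (by norm_num) ?_
    funext i
    simp only [if_pos rfl, one_smul, Prod.snd_add, Pi.add_apply, Prod.smul_snd,
      Pi.smul_apply, smul_eq_mul]
    split_ifs
    all_goals try omega
    all_goals norm_num
  · refine Prod.ext (by simp [hm]) ?_
    funext i
    simp only [if_neg hm, Prod.snd_add, Pi.add_apply, Prod.smul_snd, Pi.smul_apply,
      smul_eq_mul]
    split_ifs
    all_goals try omega
    all_goals try (rw [if_pos (show i = m by omega)])
    all_goals try (rw [if_neg (show ¬ i = m by omega)])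
    all_goals norm_num

lemma mu_fst (ℓ k n : ℕ) (m : ℕ) (j : ℕ) :
    (Lam k + xiM ℓ k k - n • deltaC ℓ - subW m).1 j = if j = k then 1 else 0 := by
  simp [Lam, xiM, deltaC, subW, Prod.fst_add, Prod.fst_sub, Prod.smul_fst]

lemma mu_snd (ℓ k n m j : ℕ) (hk2 : 2 ≤ k) (hkℓ : k < ℓ) (hj : j ≤ ℓ) :
    (Lam k + xiM ℓ k k - n • deltaC ℓ - subW m).2 j
      = (if j = 0 then (k : ℚ)/2 - n
         else if j ≤ k then (k : ℚ) - j - 2*n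
         else if j = ℓ then -(n:ℚ) else -2*(n:ℚ))
        - (if j < m then (if j = 0 then (1:ℚ) else 2) else 0) := by
  have hj0 : (0:ℚ) ≤ (j:ℚ) := Nat.cast_nonneg j
  have hmin : min ((k:ℚ) - (j:ℚ)) ((k:ℚ)) = (k:ℚ) - (j:ℚ) := min_eq_left (by linarith)
  show (Lam k).2 j + (xiM ℓ k k).2 j - n • (deltaC ℓ).2 j - (subW m).2 j = _
  simp only [Lam, xiM, deltaC, subW, nsmul_eq_mul, Pi.zero_apply]
  rw [hmin]
  split_ifs
  all_goals try omega
  all_goals try (push_cast; ring)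
  all_goals (push_cast; linarith [show (j:ℚ) = (k:ℚ) from by exact_mod_cast (show j = k by omega)])

lemma pair_step (ℓ k n m : ℕ) (hℓ : 2 ≤ ℓ) (hk2 : 2 ≤ k) (hkℓ : k < ℓ) (hm : m < ℓ) :
    pairC ℓ m (Lam k + xiM ℓ k k - n • deltaC ℓ - subW m)
      = if m = 0 then 1 else 2 := by
  have hℓ3 : 3 ≤ ℓ := by omega
  unfold pairC
  rcases Nat.eq_zero_or_pos m with rfl | hm1
  · rw [sum_cartan0 ℓ hℓ, mu_fst, mu_snd ℓ k n 0 0 hk2 hkℓ (by omega),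
      mu_snd ℓ k n 0 1 hk2 hkℓ (by omega)]
    rw [if_neg (by omega : ¬ (0:ℕ) = k), if_pos rfl, if_neg (by omega : ¬ (1:ℕ) = 0),
      if_pos (by omega : 1 ≤ k), if_neg (by omega : ¬ (0:ℕ) < 0), if_neg (by omega : ¬ (1:ℕ) < 0),
      if_pos rfl]
    push_cast
    ring
  · obtain ⟨m', rfl⟩ : ∃ m', m = m' + 1 := ⟨m - 1, by omega⟩
    rw [sum_cartan ℓ (m' + 1) hℓ (by omega) hm, mu_fst,
      mu_snd ℓ k n (m' + 1) (m' + 1 - 1) hk2 hkℓ (by omega),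
      mu_snd ℓ k n (m' + 1) (m' + 1) hk2 hkℓ (by omega),
      mu_snd ℓ k n (m' + 1) (m' + 1 + 1) hk2 hkℓ (by omega)]
    simp only [Nat.add_sub_cancel]
    rw [if_pos (by omega : m' < m' + 1), if_neg (by omega : ¬ m' + 1 < m' + 1),
      if_neg (by omega : ¬ m' + 1 + 1 < m' + 1), if_neg (by omega : ¬ m' + 1 = 0),
      if_neg (by omega : ¬ m' + 1 + 1 = 0), if_neg (by omega : ¬ m' + 1 = ℓ),
      if_neg (by omega : ¬ m' + 1 = 0)]
    simp only [show (m' + 1 = 1) ↔ (m' = 0) from by omega]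
    split_ifs
    all_goals try omega
    all_goals try (push_cast; ring)
    all_goals try (push_cast; linarith [show (m':ℚ) = 0 from by exact_mod_cast (show m' = 0 by omega)])
    all_goals try (push_cast; linarith [show ((m':ℚ) + 1) = (k:ℚ) from by exact_mod_cast (show m' + 1 = k by omega)])
    all_goals (push_cast; linarith [show (m':ℚ) = (k:ℚ) from by exact_mod_cast (show m' = k by omega)])

lemma loopC (ℓ k n : ℕ) (hℓ : 2 ≤ ℓ) (hk2 : 2 ≤ k) (hkℓ : k < ℓ) :
    ∀ m, m ≤ ℓ →
      List.foldl (fun v j => reflC ℓ j v) (Lam k + xiM ℓ k k - n • deltaC ℓ) (List.range m)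
        = Lam k + xiM ℓ k k - n • deltaC ℓ - subW m := by
  intro m
  induction m with
  | zero => intro _; simp [subW_zero]
  | succ m ih =>
    intro hm
    rw [List.range_succ, List.foldl_append, ih (by omega), List.foldl_cons, List.foldl_nil]
    show reflC ℓ m _ = _
    unfold reflC
    rw [pair_step ℓ k n m hℓ hk2 hkℓ (by omega), subW_succ]
    abel

lemma subW_top (ℓ : ℕ) (hℓ : 2 ≤ ℓ) : subW ℓ = deltaC ℓ - al ℓ := by
  unfold subW deltaC al
  refine Prod.ext (by norm_num) ?_
  funext j
  show _ = ((_ : ℕ → ℚ) - _) j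
  simp only [Pi.sub_apply]
  split_ifs
  all_goals try omega
  all_goals norm_num

theorem stmt12' (ℓ k n : ℕ) (hℓ : 2 ≤ ℓ) (hk1 : 1 ≤ k) (hk : k ≤ ℓ - 1)
    (hev : Even k) :
    Lam k + xiM ℓ k k - (n + 1) • deltaC ℓ + al ℓ
      = wordAct ℓ ((List.range ℓ).reverse)
          (Lam k + xiM ℓ k k - n • deltaC ℓ) := by
  have hk2 : 2 ≤ k := by
    rcases hev with ⟨r, rfl⟩; omega
  have hkℓ : k < ℓ := by omega
  unfold wordAct
  rw [List.foldr_reverse]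
  rw [loopC ℓ k n hℓ hk2 hkℓ ℓ le_rfl, subW_top ℓ hℓ, succ_nsmul]
  abel

/-- Λ_k + ξ_k^{(-k)} − (n+1)δ + α_ℓ
= r_{ℓ-1} r_{ℓ-2}⋯r_1 r_0 (Λ_k + ξ_k^{(-k)} − nδ), k even. -/
theorem stmt12 (ℓ k n : ℕ) (hℓ : 2 ≤ ℓ) (hk1 : 1 ≤ k) (hk : k ≤ ℓ - 1)
    (hev : Even k) :
    Lam k + xiM ℓ k k - (n + 1) • deltaC ℓ + al ℓ
      = wordAct ℓ ((List.range ℓ).reverse)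
          (Lam k + xiM ℓ k k - n • deltaC ℓ) :=
  stmt12' ℓ k n hℓ hk1 hk hev
end

section
/- Let $\ell \ge 2$, $k \in \{0,\dots,\ell\}$, and $i \ge 0$ even with $k - i \ge 0$. The rectangular partition $\lambda(-i) = \big((\ell - k + i/2)^{\,i}\big)$ (that is, $i$ rows each of length $\ell-k+i/2$), with residues computed at charge $k$, has content equal to $\tfrac{i}{2}\delta - \xi_k^{(-i)}$, i.e. $\tfrac{i}{2}\alpha_\ell + i(\alpha_{\ell-1} + \cdots + \alpha_k) + (i-1)\alpha_{k-1} + (i-2)\alpha_{k-2} + \cdots + \alpha_{k-i+1}$. -/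
open scoped BigOperators

lemma fres_eq_iff (ℓ j : ℕ) (m : ℤ) (h1 : 1 ≤ m) (h2 : m ≤ 2*ℓ - 1) :
    j = fres ℓ m ↔ (m = j ∧ j ≤ ℓ) ∨ (m = 2*(ℓ:ℤ) - j ∧ 0 < j ∧ j < ℓ) := by
  have hmod : m % (2*(ℓ:ℤ)) = m := Int.emod_eq_of_lt (by omega) (by omega)
  unfold fres
  simp only [hmod]
  split_ifs with h <;> omega

lemma ind_split (ℓ j : ℕ) (m : ℤ) (h1 : 1 ≤ m) (h2 : m ≤ 2*ℓ - 1) :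
    (if j = fres ℓ m then (1:ℚ) else 0)
      = (if m = (j:ℤ) ∧ j ≤ ℓ then (1:ℚ) else 0)
        + (if m = 2*(ℓ:ℤ) - j ∧ 0 < j ∧ j < ℓ then (1:ℚ) else 0) := by
  have hiff := fres_eq_iff ℓ j m h1 h2
  by_cases hA : m = (j:ℤ) ∧ j ≤ ℓ
  · rw [if_pos hA, if_pos (hiff.mpr (Or.inl hA)), if_neg (by omega)]; norm_num
  · by_cases hB : m = 2*(ℓ:ℤ) - j ∧ 0 < j ∧ j < ℓ
    · rw [if_neg hA, if_pos hB, if_pos (hiff.mpr (Or.inr hB))]; norm_num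
    · rw [if_neg hA, if_neg hB, if_neg (by rw [hiff]; tauto)]; norm_num

lemma cnt_Ico (i lo hi : ℕ) :
    (∑ r ∈ Finset.range i, if lo ≤ r ∧ r < hi then (1:ℚ) else 0)
      = ((min hi i - min lo i : ℕ) : ℚ) := by
  rw [Finset.sum_boole]
  congr 1
  rw [show (Finset.range i).filter (fun r => lo ≤ r ∧ r < hi)
      = Finset.Ico (min lo i) (min hi i) by
    ext r; simp [Finset.mem_filter, Finset.mem_Ico, Finset.mem_range]; omega,
    Nat.card_Ico]

def Dcnt (i w k : ℕ) (t : ℤ) : ℕ :=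
  min (((w:ℤ)+k-t).toNat) i - min (((k:ℤ)-t).toNat) i

lemma diagSum (i w k : ℕ) (t : ℤ) :
    (∑ r ∈ Finset.range i, ∑ c ∈ Finset.range w, if (k:ℤ)+c-r = t then (1:ℚ) else 0)
      = ((Dcnt i w k t : ℕ) : ℚ) := by
  have inner : ∀ r : ℕ, (∑ c ∈ Finset.range w, if (k:ℤ)+c-r = t then (1:ℚ) else 0)
      = if ((k:ℤ)-t).toNat ≤ r ∧ r < ((w:ℤ)+k-t).toNat then (1:ℚ) else 0 := by
    intro r
    by_cases h : ((k:ℤ)-t).toNat ≤ r ∧ r < ((w:ℤ)+k-t).toNat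
    · rw [if_pos h]
      rw [Finset.sum_eq_single_of_mem (t - k + r).toNat (Finset.mem_range.mpr (by omega))]
      · rw [if_pos (by omega)]
      · intro c _ hne; exact if_neg (by omega)
    · rw [if_neg h]
      exact Finset.sum_eq_zero fun c hc => if_neg (by have := Finset.mem_range.mp hc; omega)
  simp only [inner]
  rw [cnt_Ico]
  rfl

theorem stmt16' (ℓ k i : ℕ) (hℓ : 2 ≤ ℓ) (hk : k ≤ ℓ) (hev : Even i) (hik : i ≤ k) :
    contV ℓ k i (fun r => if r < i then ℓ - k + i / 2 else 0)
      = (i / 2) • deltaC ℓ - xiM ℓ k i := by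
  obtain ⟨n, hn⟩ := hev
  set w := ℓ - k + i / 2 with hw
  have hcv : contV ℓ k i (fun r => if r < i then ℓ - k + i / 2 else 0)
      = ∑ r ∈ Finset.range i, ∑ c ∈ Finset.range w, al (fres ℓ ((k:ℤ)+c-r)) := by
    unfold contV
    refine Finset.sum_congr rfl fun r hr => ?_
    simp only
    rw [if_pos (Finset.mem_range.mp hr)]
  rw [hcv]
  refine Prod.ext ?_ ?_
  · simp [Prod.fst_sum, al, deltaC, xiM]
  · funext j
    have hL : (∑ r ∈ Finset.range i, ∑ c ∈ Finset.range w, al (fres ℓ ((k:ℤ)+c-r))).2 j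
        = ∑ r ∈ Finset.range i, ∑ c ∈ Finset.range w,
            if j = fres ℓ ((k:ℤ)+c-r) then (1:ℚ) else 0 := by
      simp [Prod.snd_sum, al, Finset.sum_apply]
    have hR : ((i / 2) • deltaC ℓ - xiM ℓ k i).2 j
        = ((i/2 : ℕ) : ℚ) * (if j = 0 ∨ j = ℓ then 1 else if j < ℓ then 2 else 0)
          - (if k ≤ j ∨ ℓ < j then 0 else if j = 0 then (i : ℚ) / 2
              else min ((k : ℚ) - j) i) := by
      simp [deltaC, xiM]
    rw [hL, hR]
    have hsplit : (∑ r ∈ Finset.range i, ∑ c ∈ Finset.range w,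
          if j = fres ℓ ((k:ℤ)+c-r) then (1:ℚ) else 0)
        = (∑ r ∈ Finset.range i, ∑ c ∈ Finset.range w,
            if (k:ℤ)+c-r = (j:ℤ) ∧ j ≤ ℓ then (1:ℚ) else 0)
          + (∑ r ∈ Finset.range i, ∑ c ∈ Finset.range w,
              if (k:ℤ)+c-r = 2*(ℓ:ℤ)-j ∧ 0 < j ∧ j < ℓ then (1:ℚ) else 0) := by
      rw [← Finset.sum_add_distrib]
      refine Finset.sum_congr rfl fun r hr => ?_
      rw [← Finset.sum_add_distrib]
      refine Finset.sum_congr rfl fun c hc => ?_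
      have hr' := Finset.mem_range.mp hr
      have hc' := Finset.mem_range.mp hc
      exact ind_split ℓ j _ (by omega) (by omega)
    rw [hsplit]
    have hcast : ((i/2 : ℕ) : ℚ) * 2 = (i : ℚ) := by
      have h2 : i / 2 + i / 2 = i := by omega
      calc ((i/2 : ℕ) : ℚ) * 2 = ((i/2 + i/2 : ℕ) : ℚ) := by push_cast; ring
        _ = (i : ℚ) := by rw [h2]
    by_cases hj1 : ℓ < j
    · have z1 : (∑ r ∈ Finset.range i, ∑ c ∈ Finset.range w,
          if (k:ℤ)+c-r = (j:ℤ) ∧ j ≤ ℓ then (1:ℚ) else 0) = 0 :=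
        Finset.sum_eq_zero fun r _ => Finset.sum_eq_zero fun c _ => if_neg (by omega)
      have z2 : (∑ r ∈ Finset.range i, ∑ c ∈ Finset.range w,
          if (k:ℤ)+c-r = 2*(ℓ:ℤ)-j ∧ 0 < j ∧ j < ℓ then (1:ℚ) else 0) = 0 :=
        Finset.sum_eq_zero fun r _ => Finset.sum_eq_zero fun c _ => if_neg (by omega)
      rw [z1, z2, if_neg (by omega : ¬(j = 0 ∨ j = ℓ)), if_neg (by omega : ¬ j < ℓ),
        if_pos (Or.inr hj1)]
      ring
    · have hjle : j ≤ ℓ := by omega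
      have s1 : (∑ r ∈ Finset.range i, ∑ c ∈ Finset.range w,
            if (k:ℤ)+c-r = (j:ℤ) ∧ j ≤ ℓ then (1:ℚ) else 0)
          = ((Dcnt i w k j : ℕ) : ℚ) := by
        rw [← diagSum]
        exact Finset.sum_congr rfl fun r _ => Finset.sum_congr rfl fun c _ =>
          if_congr (and_iff_left hjle) rfl rfl
      rw [s1]
      by_cases hjl : j < ℓ
      · by_cases hj0 : 0 < j
        · have s2 : (∑ r ∈ Finset.range i, ∑ c ∈ Finset.range w,
              if (k:ℤ)+c-r = 2*(ℓ:ℤ)-j ∧ 0 < j ∧ j < ℓ then (1:ℚ) else 0)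
            = ((Dcnt i w k (2*(ℓ:ℤ)-j) : ℕ) : ℚ) := by
            rw [← diagSum]
            exact Finset.sum_congr rfl fun r _ => Finset.sum_congr rfl fun c _ =>
              if_congr (and_iff_left ⟨hj0, hjl⟩) rfl rfl
          rw [s2, if_neg (by omega : ¬(j = 0 ∨ j = ℓ)), if_pos hjl]
          by_cases hkj : k ≤ j
          · rw [if_pos (Or.inl hkj)]
            have hD : Dcnt i w k j + Dcnt i w k (2*(ℓ:ℤ)-j) = i := by
              unfold Dcnt; omega
            have := congrArg (fun m : ℕ => (m : ℚ)) hD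
            push_cast at this
            linarith
          · rw [if_neg (by omega : ¬(k ≤ j ∨ ℓ < j)), if_neg (by omega : ¬ j = 0)]
            have hm : min ((k:ℚ) - j) i = (((k-j : ℕ) : ℚ)) ⊓ (i : ℚ) := by
              rw [Nat.cast_sub (by omega : j ≤ k)]
            rw [hm]
            have hD : Dcnt i w k j + Dcnt i w k (2*(ℓ:ℤ)-j) + min (k-j) i = i := by
              unfold Dcnt; omega
            have := congrArg (fun m : ℕ => (m : ℚ)) hD
            push_cast at this
            linarith
        · -- j = 0
          have hj0' : j = 0 := by omega
          have z2 : (∑ r ∈ Finset.range i, ∑ c ∈ Finset.range w,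
              if (k:ℤ)+c-r = 2*(ℓ:ℤ)-j ∧ 0 < j ∧ j < ℓ then (1:ℚ) else 0) = 0 :=
            Finset.sum_eq_zero fun r _ => Finset.sum_eq_zero fun c _ => if_neg (by omega)
          rw [z2, if_pos (Or.inl hj0')]
          by_cases hk0 : k = 0
          · have hi0 : i = 0 := by omega
            rw [if_pos (Or.inl (by omega : k ≤ j))]
            have hD : Dcnt i w k j = 0 := by unfold Dcnt; omega
            rw [hD, hi0]
            norm_num
          · rw [if_neg (by omega : ¬(k ≤ j ∨ ℓ < j)), if_pos hj0']
            have hD : Dcnt i w k j = 0 := by unfold Dcnt; omega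
            rw [hD]
            push_cast
            linarith [hcast]
      · -- j = ℓ
        have hjl' : j = ℓ := by omega
        have z2 : (∑ r ∈ Finset.range i, ∑ c ∈ Finset.range w,
            if (k:ℤ)+c-r = 2*(ℓ:ℤ)-j ∧ 0 < j ∧ j < ℓ then (1:ℚ) else 0) = 0 :=
          Finset.sum_eq_zero fun r _ => Finset.sum_eq_zero fun c _ => if_neg (by omega)
        rw [z2, if_pos (Or.inr hjl'), if_pos (Or.inl (by omega : k ≤ j))]
        have hD : Dcnt i w k j = i / 2 := by unfold Dcnt; omega
        rw [hD]
        ring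

/-- the rectangle λ(-i) = ((ℓ−k+i/2)^i) at charge k has content
(i/2)δ − ξ_k^{(-i)}. -/
theorem stmt16 (ℓ k i : ℕ) (hℓ : 2 ≤ ℓ) (hk : k ≤ ℓ) (hev : Even i) (hik : i ≤ k) :
    contV ℓ k i (fun r => if r < i then ℓ - k + i / 2 else 0)
      = (i / 2) • deltaC ℓ - xiM ℓ k i :=
  stmt16' ℓ k i hℓ hk hev hik
end

section
/- Let $\ell \ge 2$, $k \in \{0,\dots,\ell\}$, and $i \ge 0$ even with $k + i \le \ell$. The rectangular partition $\lambda(+i) = \big(i^{\,k+i/2}\big)$ (that is, $k + i/2$ rows each of length $i$), with residues computed at charge $k$, has content equal to $\tfrac{i}{2}\delta - \xi_k^{(i)}$, i.e. $\tfrac{i}{2}\alpha_0 + i(\alpha_1 + \cdots + \alpha_k) + (i-1)\alpha_{k+1} + (i-2)\alpha_{k+2} + \cdots + \alpha_{k+i-1}$. -/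
open scoped BigOperators

lemma fres_natAbs (ℓ : ℕ) (m : ℤ) (h : m.natAbs < ℓ) : fres ℓ m = m.natAbs := by
  have key : (0 ≤ m ∧ m % (2*(ℓ:ℤ)) = m) ∨ (m < 0 ∧ m % (2*(ℓ:ℤ)) = m + 2*ℓ) := by
    rcases le_or_gt 0 m with h0 | h0
    · exact Or.inl ⟨h0, Int.emod_eq_of_lt h0 (by omega)⟩
    · refine Or.inr ⟨h0, ?_⟩
      have h1 : (m + 2*(ℓ:ℤ)*1) % (2*ℓ) = m % (2*ℓ) := Int.add_mul_emod_self_left m (2*(ℓ:ℤ)) 1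
      rw [← h1, Int.emod_eq_of_lt (a := m + 2*(ℓ:ℤ)*1) (b := 2*(ℓ:ℤ)) (by omega) (by omega)]; ring
  rcases key with ⟨hm, hk⟩ | ⟨hm, hk⟩ <;> simp only [fres, hk] <;> split_ifs <;> omega

lemma sum_eq_ind (s : ℤ) (n : ℕ) : (∑ c ∈ Finset.range n, if (c:ℤ) = s then (1:ℚ) else 0)
    = if 0 ≤ s ∧ s < n then 1 else 0 := by
  induction n with
  | zero => rw [Finset.range_zero, Finset.sum_empty, if_neg (by push_cast; omega)]
  | succ n ih =>
    rw [Finset.sum_range_succ, ih]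
    by_cases h : (n:ℤ) = s
    · rw [if_pos h, if_neg (by omega), if_pos (by constructor <;> push_cast <;> omega)]
      norm_num
    · rw [if_neg h, add_zero]
      split_ifs with h1 h2 <;> first | rfl | (exfalso; push_cast at *; omega)

lemma countI (lo hi : ℤ) (R : ℕ) : (∑ r ∈ Finset.range R, if lo ≤ (r:ℤ) ∧ (r:ℤ) < hi then (1:ℚ) else 0)
    = ((max 0 (min hi R - max 0 lo) : ℤ) : ℚ) := by
  induction R with
  | zero =>
    rw [Finset.range_zero, Finset.sum_empty]
    have h : (max 0 (min hi ((0:ℕ):ℤ) - max 0 lo)) = 0 := by push_cast; omega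
    rw [h, Int.cast_zero]
  | succ n ih =>
    rw [Finset.sum_range_succ, ih]
    have h1 : ((n+1 : ℕ) : ℤ) = (n:ℤ) + 1 := by push_cast; ring
    rw [h1]
    split_ifs with h
    · have h2 : max 0 (min hi ((n:ℤ)+1) - max 0 lo) = max 0 (min hi (n:ℤ) - max 0 lo) + 1 := by omega
      rw [h2, Int.cast_add, Int.cast_one]
    · have h2 : max 0 (min hi ((n:ℤ)+1) - max 0 lo) = max 0 (min hi (n:ℤ) - max 0 lo) := by
        push_neg at h; omega
      rw [h2, add_zero]

/-- the rectangle λ(+i) = (i^{k+i/2}) at charge k has content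
(i/2)δ − ξ_k^{(i)}. -/
theorem stmt17 (ℓ k i : ℕ) (hℓ : 2 ≤ ℓ) (hev : Even i) (hki : k + i ≤ ℓ) :
    contV ℓ k (k + i / 2) (fun r => if r < k + i / 2 then i else 0)
      = (i / 2) • deltaC ℓ - xiP ℓ k i := by
  obtain ⟨i2, hi2⟩ := hev
  have hdiv : i / 2 = i2 := by omega
  apply Prod.ext
  · simp [contV, al, deltaC, xiP, Prod.fst_sum, Prod.fst_sub, Prod.smul_fst]
  · funext j
    have hL : (contV ℓ k (k + i / 2) (fun r => if r < k + i / 2 then i else 0)).2 j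
        = ∑ r ∈ Finset.range (k + i / 2), ∑ c ∈ Finset.range i,
            (if j = fres ℓ ((k:ℤ) + c - r) then (1:ℚ) else 0) := by
      simp only [contV, Prod.snd_sum, Finset.sum_apply, al]
      refine Finset.sum_congr rfl fun r hr => ?_
      rw [if_pos (Finset.mem_range.mp hr)]
    rw [hL]
    have hR : ((i / 2) • deltaC ℓ - xiP ℓ k i).2 j
        = (i2 : ℚ) * (if j = 0 ∨ j = ℓ then 1 else if j < ℓ then 2 else 0)
          - (if j ≤ k ∨ ℓ < j then 0 else if j = ℓ then (i : ℚ) / 2 else min ((j : ℚ) - k) i) := by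
      simp only [Prod.snd_sub, Prod.smul_snd, Pi.sub_apply, Pi.smul_apply, deltaC, xiP,
        smul_eq_mul, hdiv]
      ring
    rw [hR]
    rcases eq_or_ne j 0 with hj | hj
    · -- j = 0
      subst hj
      have key : ∀ r ∈ Finset.range (k + i / 2),
          (∑ c ∈ Finset.range i, if 0 = fres ℓ ((k:ℤ) + c - r) then (1:ℚ) else 0)
          = (if (k:ℤ) ≤ r ∧ (r:ℤ) < k + i then 1 else 0) := by
        intro r hr
        rw [Finset.mem_range] at hr
        have e1 : ∀ c ∈ Finset.range i, (if 0 = fres ℓ ((k:ℤ) + c - r) then (1:ℚ) else 0)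
            = (if (c:ℤ) = (r:ℤ) - k then 1 else 0) := by
          intro c hc
          rw [Finset.mem_range] at hc
          rw [fres_natAbs ℓ _ (by omega)]
          split_ifs with h1 h2 h2 <;> first | rfl | (exfalso; omega)
        rw [Finset.sum_congr rfl e1, sum_eq_ind]
        split_ifs with h1 h2 h2 <;> first | rfl | (exfalso; push_cast at *; omega)
      rw [Finset.sum_congr rfl key, countI]
      rw [if_pos (Or.inl rfl), if_pos (Or.inl (by omega))]
      have hz : max 0 (min ((k:ℤ) + i) ((k + i / 2 : ℕ) : ℤ) - max 0 (k:ℤ)) = (i2 : ℤ) := by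
        push_cast; omega
      rw [hz]
      push_cast; ring
    · -- j ≠ 0
      have key : ∀ r ∈ Finset.range (k + i / 2),
          (∑ c ∈ Finset.range i, if j = fres ℓ ((k:ℤ) + c - r) then (1:ℚ) else 0)
          = ((if (k:ℤ) - j ≤ r ∧ (r:ℤ) < (k:ℤ) + i - j then 1 else 0)
            + (if (k:ℤ) + j ≤ r ∧ (r:ℤ) < (k:ℤ) + i + j then 1 else 0)) := by
        intro r hr
        rw [Finset.mem_range] at hr
        have e1 : ∀ c ∈ Finset.range i, (if j = fres ℓ ((k:ℤ) + c - r) then (1:ℚ) else 0)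
            = ((if (c:ℤ) = (j:ℤ) + r - k then 1 else 0)
              + (if (c:ℤ) = (r:ℤ) - k - j then 1 else 0)) := by
          intro c hc
          rw [Finset.mem_range] at hc
          rw [fres_natAbs ℓ _ (by omega)]
          split_ifs <;> first | (exfalso; omega) | norm_num
        rw [Finset.sum_congr rfl e1, Finset.sum_add_distrib, sum_eq_ind, sum_eq_ind]
        congr 1 <;> (split_ifs <;> first | rfl | (exfalso; omega))
      rw [Finset.sum_congr rfl key, Finset.sum_add_distrib, countI, countI]
      have hZ : (↑i2 * (if j = 0 ∨ j = ℓ then (1:ℚ) else if j < ℓ then 2 else 0))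
          - (if j ≤ k ∨ ℓ < j then 0 else if j = ℓ then (i:ℚ) / 2 else min ((j:ℚ) - k) i)
          = (((i2 : ℤ) * (if j = 0 ∨ j = ℓ then (1:ℤ) else if j < ℓ then 2 else 0)
          - (if j ≤ k ∨ ℓ < j then 0 else if j = ℓ then (i2:ℤ) else min ((j:ℤ) - k) i) : ℤ) : ℚ) := by
        split_ifs <;> (try rw [hi2]) <;> push_cast <;> ring
      rw [hZ, ← Int.cast_add]
      refine congrArg _ ?_
      split_ifs <;> push_cast <;> omega
end
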